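/- arXiv:2011.11977 — 8 statements merged into one kernel-verified Lean document; each statement's English description precedes it below -/
import Mathlib

section
/- For every real-valued function f on M_L^N, the quadratic form of the weighted adjacency operator is controlled by the potential: |∑_{m ∈ M_L^N} ∑_{n ∈ M_L^N, n ∼ m} w(m,n) f(m) f(n)| ≤ 4J ∑_{m ∈ M_L^N} V(m) f(m)². Equivalently, as quadratic forms, −4J V_N ≤ A_N ≤ 4J V_N. -/
open scoped Classical

/-- The interaction potential `V(m) = ∑_{j=1}^{L-1}[J(m(j)+m(j+1)) − m(j)m(j+1)] + J(m(1)+m(L))`,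
where `J = twoJ/2`. Sites are labeled `1,…,L`. -/
noncomputable def potV (twoJ L : ℕ) (m : ℕ → ℕ) : ℝ :=
  (∑ j ∈ Finset.Icc 1 (L - 1),
      ((twoJ : ℝ) / 2 * ((m j : ℝ) + (m (j + 1) : ℝ)) - (m j : ℝ) * (m (j + 1) : ℝ)))
    + (twoJ : ℝ) / 2 * ((m 1 : ℝ) + (m L : ℝ))

/-- Adjacency of occupation functions: one particle hops between neighboring sites
`j₀, j₀+1` with `j₀ ∈ {1,…,L−1}`. -/
def adjC (L : ℕ) (m n : ℕ → ℕ) : Prop :=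
  ∃ j₀ ∈ Finset.Icc 1 (L - 1),
    (((m j₀ : ℤ) - (n j₀ : ℤ) = 1 ∧ (m (j₀ + 1) : ℤ) - (n (j₀ + 1) : ℤ) = -1) ∨
     ((m j₀ : ℤ) - (n j₀ : ℤ) = -1 ∧ (m (j₀ + 1) : ℤ) - (n (j₀ + 1) : ℤ) = 1)) ∧
    ∀ j, j ≠ j₀ → j ≠ j₀ + 1 → m j = n j

/-- The hopping weight `w(m,n) = ∏_{j : m(j) ≠ n(j)} (J(m(j)+n(j)+1) − m(j)n(j))^{1/2}`,
with `J = twoJ/2`. -/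
noncomputable def wt (twoJ L : ℕ) (m n : ℕ → ℕ) : ℝ :=
  ∏ j ∈ (Finset.Icc 1 L).filter (fun j => m j ≠ n j),
    Real.sqrt ((twoJ : ℝ) / 2 * ((m j : ℝ) + (n j : ℝ) + 1) - (m j : ℝ) * (n j : ℝ))

/-- A configuration `m : Λ_L → {0,…,2J}` extended to `ℕ → ℕ` (1-indexed, vanishing
outside `Λ_L = {1,…,L}`). -/
def extOcc (twoJ L : ℕ) (m : Fin L → Fin (twoJ + 1)) : ℕ → ℕ :=
  fun s => if h : 1 ≤ s ∧ s ≤ L then (m ⟨s - 1, by omega⟩ : ℕ) else 0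

/-- `M_L^N`: configurations with `N` particles in total. -/
noncomputable def MLN (twoJ L N : ℕ) : Finset (Fin L → Fin (twoJ + 1)) :=
  Finset.univ.filter (fun m => ∑ j, (m j : ℕ) = N)

/-!
A Schur test. By `|f(m) f(n)| ≤ (f(m)² + f(n)²)/2` and the symmetry of `w`, the quadratic form
of `A_N` is at most `∑_m (∑_{n ∼ m} w(m,n)) f(m)²`, so it suffices to bound each row sum of `A_N`
by `4J V(m)`. A neighbour of `m` arises by moving one particle across a bond `{j, j+1}`, injectively
in the ordered pair of sites. Moving it from occupation `a` to occupation `b` has weight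
`√(a(2J+1-a)) √((b+1)(2J-b)) ≤ 2J a (2J-b)` (with `c = 2J - b`, use `x(2J+1-x) ≤ 2J x²` for
`x ∈ ℕ`), and the two directions across a bond add up to `4J (J(a+b) - ab)`, the bond's term
of `4J V(m)`.
-/

open Finset

theorem Finset.sum_le_sum_of_injOn {α β γ : Type*} [AddCommMonoid γ] [PartialOrder γ]
    [IsOrderedAddMonoid γ] {T : Finset α} {P : Finset β}
    (φ : α → β) (hφ : Set.InjOn φ T) (hmaps : ∀ x ∈ T, φ x ∈ P)
    {f : α → γ} {h : β → γ} (hle : ∀ x ∈ T, f x ≤ h (φ x)) (h0 : ∀ p ∈ P, 0 ≤ h p) :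
    ∑ x ∈ T, f x ≤ ∑ p ∈ P, h p :=
  calc ∑ x ∈ T, f x ≤ ∑ x ∈ T, h (φ x) := sum_le_sum hle
    _ = ∑ p ∈ T.image φ, h p := (sum_image hφ).symm
    _ ≤ ∑ p ∈ P, h p := sum_le_sum_of_subset_of_nonneg
        (image_subset_iff.2 hmaps) fun p hp _ => h0 p hp

theorem abs_sum_filter_mul_le {α : Type*} (s : Finset α) (r : α → α → Prop) [DecidableRel r]
    (hr : ∀ x y, r x y → r y x) (w : α → α → ℝ) (hw : ∀ x y, w x y = w y x)
    (hw0 : ∀ x y, 0 ≤ w x y) (f : α → ℝ) :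
    |∑ x ∈ s, ∑ y ∈ s.filter (r x), w x y * f x * f y|
      ≤ ∑ x ∈ s, (∑ y ∈ s.filter (r x), w x y) * f x ^ 2 := by
  have swap : ∑ x ∈ s, ∑ y ∈ s.filter (r x), w x y * f y ^ 2
      = ∑ x ∈ s, ∑ y ∈ s.filter (r x), w x y * f x ^ 2 := by
    rw [sum_comm' (t' := s) (s' := fun y => s.filter (r y))]
    · simp only [hw]
    · intro x y
      simp only [mem_filter]
      exact ⟨fun ⟨hx, hy, hxy⟩ => ⟨⟨hx, hr x y hxy⟩, hy⟩, fun ⟨⟨hx, hyx⟩, hy⟩ => ⟨hx, hy, hr y x hyx⟩⟩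
  calc |∑ x ∈ s, ∑ y ∈ s.filter (r x), w x y * f x * f y|
      ≤ ∑ x ∈ s, ∑ y ∈ s.filter (r x), w x y * ((f x ^ 2 + f y ^ 2) / 2) := by
        refine (abs_sum_le_sum_abs _ _).trans (sum_le_sum fun x _ =>
          (abs_sum_le_sum_abs _ _).trans (sum_le_sum fun y _ => ?_))
        rw [mul_assoc, abs_mul, abs_of_nonneg (hw0 x y), abs_mul]
        refine mul_le_mul_of_nonneg_left ?_ (hw0 x y)
        nlinarith [two_mul_le_add_sq |f x| |f y|, sq_abs (f x), sq_abs (f y)]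
    _ = ∑ x ∈ s, (∑ y ∈ s.filter (r x), w x y) * f x ^ 2 := by
        simp only [mul_add, mul_div_assoc', add_div, sum_add_distrib, ← sum_div, swap, sum_mul]
        ring

noncomputable def hopAmp (t a b : ℕ) : ℝ :=
  √((a : ℝ) * (t + 1 - a)) * √(((b : ℝ) + 1) * (t - b))

theorem hopAmp_nonneg (t a b : ℕ) : 0 ≤ hopAmp t a b :=
  mul_nonneg (Real.sqrt_nonneg _) (Real.sqrt_nonneg _)

theorem mul_add_one_sub_le (t x : ℕ) : (x : ℝ) * (t + 1 - x) ≤ t * x ^ 2 := by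
  rcases Nat.eq_zero_or_pos x with rfl | hx
  · simp
  · have : (1 : ℝ) ≤ x := by exact_mod_cast hx
    nlinarith [mul_nonneg (by positivity : (0 : ℝ) ≤ (t + 1) * x) (sub_nonneg.2 this)]

theorem hopAmp_le (t a b : ℕ) (hb : b ≤ t) : hopAmp t a b ≤ t * a * (t - b) := by
  obtain ⟨c, rfl⟩ : ∃ c, t = b + c := ⟨t - b, by omega⟩
  set t := b + c
  calc hopAmp t a b = √((a : ℝ) * (t + 1 - a)) * √((c : ℝ) * (t + 1 - c)) := by
        rw [hopAmp]; congr 2; push_cast [t]; ring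
    _ ≤ √(t * (a : ℝ) ^ 2) * √(t * (c : ℝ) ^ 2) :=
        mul_le_mul (Real.sqrt_le_sqrt (mul_add_one_sub_le t a))
          (Real.sqrt_le_sqrt (mul_add_one_sub_le t c)) (Real.sqrt_nonneg _) (Real.sqrt_nonneg _)
    _ = t * a * c := by
        rw [← Real.sqrt_mul (by positivity), show (t : ℝ) * a ^ 2 * (t * c ^ 2) = (t * a * c) ^ 2
          by ring, Real.sqrt_sq (by positivity)]
    _ = t * a * (t - b) := by push_cast [t]; ring

theorem hopAmp_add_hopAmp_le (t a b : ℕ) (ha : a ≤ t) (hb : b ≤ t) :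
    hopAmp t a b + hopAmp t b a ≤ 2 * t * (t / 2 * (a + b) - a * b) := by
  linarith [hopAmp_le t a b hb, hopAmp_le t b a ha]

def IsHop (M N : ℕ → ℕ) (i k : ℕ) : Prop :=
  M i = N i + 1 ∧ N k = M k + 1 ∧ ∀ j, j ≠ i → j ≠ k → M j = N j

theorem IsHop.ne {M N : ℕ → ℕ} {i k : ℕ} (h : IsHop M N i k) : i ≠ k := by
  rintro rfl
  obtain ⟨hi, hk, -⟩ := h
  omega

theorem IsHop.right_unique {M N N' : ℕ → ℕ} {i k : ℕ} (h : IsHop M N i k)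
    (h' : IsHop M N' i k) : N = N' := by
  obtain ⟨hi, hk, hoff⟩ := h
  obtain ⟨hi', hk', hoff'⟩ := h'
  funext j
  by_cases hji : j = i
  · subst hji; omega
  by_cases hjk : j = k
  · subst hjk; omega
  rw [← hoff j hji hjk, hoff' j hji hjk]

theorem IsHop.wt_eq {t L : ℕ} {M N : ℕ → ℕ} {i k : ℕ} (h : IsHop M N i k)
    (hi : i ∈ Icc 1 L) (hk : k ∈ Icc 1 L) : wt t L M N = hopAmp t (M i) (M k) := by
  have hik := h.ne
  obtain ⟨hMi, hNk, hoff⟩ := h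
  have hsupp : (Icc 1 L).filter (fun j => M j ≠ N j) = {i, k} := by
    ext j
    simp only [mem_filter, mem_insert, mem_singleton]
    constructor
    · rintro ⟨-, hj⟩
      by_contra! hjik
      exact hj (hoff j hjik.1 hjik.2)
    · rintro (rfl | rfl)
      · exact ⟨hi, by omega⟩
      · exact ⟨hk, by omega⟩
  have hNi : (N i : ℝ) = M i - 1 := by rw [hMi]; push_cast; ring
  have hNk' : (N k : ℝ) = M k + 1 := by rw [hNk]; push_cast; ring
  rw [wt, hsupp, prod_pair hik, hopAmp, hNi, hNk']
  congr 2 <;> ring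

def hopPairs (L : ℕ) : Finset (ℕ × ℕ) :=
  (Icc 1 (L - 1)).image (fun j => (j, j + 1)) ∪ (Icc 1 (L - 1)).image (fun j => (j + 1, j))

theorem mem_Icc_of_mem_hopPairs {L : ℕ} {p : ℕ × ℕ} (hp : p ∈ hopPairs L) :
    p.1 ∈ Icc 1 L ∧ p.2 ∈ Icc 1 L := by
  simp only [hopPairs, mem_union, mem_image, mem_Icc] at hp ⊢
  rcases hp with ⟨j, hj, rfl⟩ | ⟨j, hj, rfl⟩ <;> omega

theorem sum_hopPairs (L : ℕ) (h : ℕ × ℕ → ℝ) :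
    ∑ p ∈ hopPairs L, h p = ∑ j ∈ Icc 1 (L - 1), (h (j, j + 1) + h (j + 1, j)) := by
  have hdisj : Disjoint ((Icc 1 (L - 1)).image (fun j => (j, j + 1)))
      ((Icc 1 (L - 1)).image (fun j => (j + 1, j))) := by
    simp only [disjoint_left, mem_image]
    rintro _ ⟨j, -, rfl⟩ ⟨j', -, hj'⟩
    simp only [Prod.mk.injEq] at hj'
    omega
  rw [hopPairs, sum_union hdisj, sum_image, sum_image, sum_add_distrib] <;>
    · intro x _ y _ hxy
      simpa using hxy

theorem adjC.exists_isHop {L : ℕ} {M N : ℕ → ℕ} (h : adjC L M N) :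
    ∃ p ∈ hopPairs L, IsHop M N p.1 p.2 := by
  obtain ⟨j, hj, hc, hoff⟩ := h
  rcases hc with ⟨h1, h2⟩ | ⟨h1, h2⟩
  · exact ⟨(j, j + 1), mem_union_left _ (mem_image_of_mem _ hj),
      show IsHop M N j (j + 1) from ⟨by omega, by omega, hoff⟩⟩
  · exact ⟨(j + 1, j), mem_union_right _ (mem_image_of_mem _ hj),
      show IsHop M N (j + 1) j from ⟨by omega, by omega, fun i hi hi' => hoff i hi' hi⟩⟩

theorem adjC_symm {L : ℕ} {M N : ℕ → ℕ} (h : adjC L M N) : adjC L N M := by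
  obtain ⟨j, hj, hc, hoff⟩ := h
  exact ⟨j, hj, by omega, fun i hi hi' => (hoff i hi hi').symm⟩

theorem wt_comm (t L : ℕ) (M N : ℕ → ℕ) : wt t L M N = wt t L N M := by
  simp only [wt, ne_comm (a := M _)]
  refine prod_congr rfl fun j _ => ?_
  ring_nf

theorem wt_nonneg (t L : ℕ) (M N : ℕ → ℕ) : 0 ≤ wt t L M N :=
  prod_nonneg fun _ _ => Real.sqrt_nonneg _

theorem sum_wt_adjC_le {ι : Type*} (t L : ℕ) (M : ℕ → ℕ) (hM : ∀ j, M j ≤ t) (S : Finset ι)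
    (g : ι → ℕ → ℕ) (hg : Set.InjOn g S) :
    ∑ n ∈ S.filter (fun n => adjC L M (g n)), wt t L M (g n) ≤ 2 * t * potV t L M := by
  have hop : ∀ n ∈ S.filter (fun n => adjC L M (g n)), ∃ p ∈ hopPairs L, IsHop M (g n) p.1 p.2 :=
    fun n hn => (mem_filter.1 hn).2.exists_isHop
  choose! φ hφP hφ using hop
  have hinj : Set.InjOn φ (S.filter (fun n => adjC L M (g n))) := fun n hn n' hn' hnn' =>
    hg (mem_filter.1 hn).1 (mem_filter.1 hn').1 ((hφ n hn).right_unique (hnn' ▸ hφ n' hn'))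
  calc ∑ n ∈ S.filter (fun n => adjC L M (g n)), wt t L M (g n)
      ≤ ∑ p ∈ hopPairs L, hopAmp t (M p.1) (M p.2) :=
        sum_le_sum_of_injOn φ hinj hφP (fun n hn => ((hφ n hn).wt_eq
          (mem_Icc_of_mem_hopPairs (hφP n hn)).1 (mem_Icc_of_mem_hopPairs (hφP n hn)).2).le)
          fun _ _ => hopAmp_nonneg _ _ _
    _ = ∑ j ∈ Icc 1 (L - 1), (hopAmp t (M j) (M (j + 1)) + hopAmp t (M (j + 1)) (M j)) :=
        sum_hopPairs L _
    _ ≤ ∑ j ∈ Icc 1 (L - 1), 2 * t * (t / 2 * ((M j : ℝ) + M (j + 1)) - M j * M (j + 1)) :=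
        sum_le_sum fun j _ => hopAmp_add_hopAmp_le t _ _ (hM j) (hM (j + 1))
    _ ≤ 2 * t * potV t L M := by
        rw [potV, mul_add, mul_sum]
        exact le_add_of_nonneg_right (by positivity)

theorem extOcc_le (t L : ℕ) (m : Fin L → Fin (t + 1)) (j : ℕ) : extOcc t L m j ≤ t := by
  unfold extOcc
  split
  · exact Fin.is_le _
  · exact Nat.zero_le _

theorem extOcc_injective (t L : ℕ) : Function.Injective (extOcc t L) := by
  intro m m' h
  funext i
  have hi := congrFun h (i + 1)
  simp only [extOcc, Nat.add_sub_cancel] at hi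
  rw [dif_pos ⟨by omega, i.isLt⟩, dif_pos ⟨by omega, i.isLt⟩] at hi
  exact Fin.ext hi

theorem adjacency_relative_bound_general (twoJ L N : ℕ) (f : (Fin L → Fin (twoJ + 1)) → ℝ) :
    |∑ m ∈ MLN twoJ L N,
        ∑ n ∈ (MLN twoJ L N).filter (fun n => adjC L (extOcc twoJ L m) (extOcc twoJ L n)),
          wt twoJ L (extOcc twoJ L m) (extOcc twoJ L n) * f m * f n|
      ≤ 2 * (twoJ : ℝ) * ∑ m ∈ MLN twoJ L N, potV twoJ L (extOcc twoJ L m) * (f m) ^ 2 := by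
  refine (abs_sum_filter_mul_le _ _ (fun _ _ => adjC_symm) _ (fun _ _ => wt_comm _ _ _ _)
    (fun _ _ => wt_nonneg _ _ _ _) f).trans ?_
  rw [mul_sum]
  refine sum_le_sum fun m _ => ?_
  have hrow := sum_wt_adjC_le twoJ L (extOcc twoJ L m) (extOcc_le twoJ L m) (MLN twoJ L N)
    (extOcc twoJ L) (extOcc_injective twoJ L).injOn
  calc _ ≤ 2 * twoJ * potV twoJ L (extOcc twoJ L m) * f m ^ 2 :=
        mul_le_mul_of_nonneg_right hrow (sq_nonneg _)
    _ = _ := by ring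

/-- for every real-valued `f` on `M_L^N`,
`|∑_{m} ∑_{n ∼ m} w(m,n) f(m) f(n)| ≤ 4J ∑_m V(m) f(m)²`, i.e. `−4J V_N ≤ A_N ≤ 4J V_N`
as quadratic forms. -/
theorem adjacency_relative_bound (twoJ L N : ℕ) (h2J : 0 < twoJ) (hL : 2 ≤ L)
    (hN : N ≤ twoJ * L) (f : (Fin L → Fin (twoJ + 1)) → ℝ) :
    |∑ m ∈ MLN twoJ L N,
        ∑ n ∈ (MLN twoJ L N).filter (fun n => adjC L (extOcc twoJ L m) (extOcc twoJ L n)),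
          wt twoJ L (extOcc twoJ L m) (extOcc twoJ L n) * f m * f n|
      ≤ 2 * (twoJ : ℝ) * ∑ m ∈ MLN twoJ L N, potV twoJ L (extOcc twoJ L m) * (f m) ^ 2 :=
  adjacency_relative_bound_general twoJ L N f
end

section
/- Let N be an integer with 4J ≤ N ≤ 2JL. Then the minimum of the potential over all N-particle configurations equals 4J²: min{V(m) : m ∈ M_L^N} = 4J². -/
/-!
Since each site occurs in exactly two of the linear terms, `V(m) = 2J·N − ∑ m(j) m(j+1)`.
If `M` is the largest occupation number, then `m(j) m(j+1) ≤ M · min (m(j), m(j+1))`, and along a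
path the minima over adjacent pairs add up to at most `N − M`. Hence
`∑ m(j) m(j+1) ≤ M (N − M) ≤ 2J (N − 2J)`, because `M ≤ 2J ≤ N / 2`. Equality holds for the
configuration that fills the sites from the left with `2J` particles each.
-/

open Finset

/-- Membership in `M_L^N`: functions `Λ_L → {0,…,2J}` (vanishing outside `Λ_L = {1,…,L}`)
whose values sum to `N`. -/
def memMLN (twoJ L N : ℕ) (m : ℕ → ℕ) : Prop :=
  (∀ j, m j ≤ twoJ) ∧ (∀ j, j ∉ Finset.Icc 1 L → m j = 0) ∧
    (∑ j ∈ Finset.Icc 1 L, m j) = N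

theorem Finset.sum_Icc_one_eq_sum_range {M : Type*} [AddCommMonoid M] (f : ℕ → M) (n : ℕ) :
    ∑ j ∈ Icc 1 n, f j = ∑ i ∈ range n, f (i + 1) := by
  rw [← Ico_add_one_right_eq_Icc, sum_Ico_eq_sum_range, add_tsub_cancel_right]
  simp only [add_comm]

section AdjacentProducts

variable (a : ℕ → ℕ)

theorem sum_range_min_succ_add_sup_le (n : ℕ) :
    ∑ i ∈ range n, min (a i) (a (i + 1)) + (range (n + 1)).sup a ≤ ∑ i ∈ range (n + 1), a i := by
  induction n with
  | zero => simp
  | succ n ih =>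
    have hle : a n ≤ (range (n + 1)).sup a := le_sup (mem_range.2 n.lt_succ_self)
    rw [sum_range_succ _ n, sum_range_succ _ (n + 1), range_add_one (n := n + 1), sup_insert]
    omega

theorem sum_range_mul_succ_add_sq_le {c : ℕ} (n : ℕ) (ha : ∀ i, a i ≤ c)
    (hsum : 2 * c ≤ ∑ i ∈ range (n + 1), a i) :
    ∑ i ∈ range n, a i * a (i + 1) + c ^ 2 ≤ c * ∑ i ∈ range (n + 1), a i := by
  set M := (range (n + 1)).sup a
  have hMc : M ≤ c := Finset.sup_le fun i _ => ha i
  have hprod : ∑ i ∈ range n, a i * a (i + 1) ≤ M * ∑ i ∈ range n, min (a i) (a (i + 1)) := by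
    rw [mul_sum]
    refine sum_le_sum fun i hi => ?_
    have hi : i < n := mem_range.1 hi
    have hleft : a i ≤ M := le_sup (mem_range.2 (by omega))
    have hright : a (i + 1) ≤ M := le_sup (mem_range.2 (by omega))
    rcases le_total (a i) (a (i + 1)) with h | h
    · rw [min_eq_left h, mul_comm]
      exact Nat.mul_le_mul_right _ hright
    · rw [min_eq_right h]
      exact Nat.mul_le_mul_right _ hleft
  have hmin := sum_range_min_succ_add_sup_le a n
  nlinarith

end AdjacentProducts

/-- The subtraction `N - c * i` is truncated, so all sites after the last, partially filled one
are empty. -/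
def greedyFill (c N i : ℕ) : ℕ := min c (N - c * i)

section GreedyFill

variable (c N : ℕ)

theorem sum_range_greedyFill (k : ℕ) : ∑ i ∈ range k, greedyFill c N i = min N (c * k) := by
  induction k with
  | zero => simp
  | succ k ih =>
    rw [sum_range_succ, ih, greedyFill, mul_add_one]
    omega

theorem greedyFill_mul_greedyFill_succ (i : ℕ) :
    greedyFill c N i * greedyFill c N (i + 1) = c * greedyFill c N (i + 1) := by
  unfold greedyFill
  rcases Nat.eq_zero_or_pos (min c (N - c * (i + 1))) with h | h
  · rw [h, mul_zero, mul_zero]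
  · rw [mul_add_one] at h ⊢
    rw [min_eq_left (by omega : c ≤ N - c * i)]

theorem sum_range_greedyFill_mul_succ {n : ℕ} (hcN : c ≤ N) (hN : N ≤ c * (n + 1)) :
    ∑ i ∈ range n, greedyFill c N i * greedyFill c N (i + 1) + c ^ 2 = c * N := by
  have htotal := sum_range_greedyFill c N (n + 1)
  rw [sum_range_succ', greedyFill, mul_zero, Nat.sub_zero, min_eq_left hcN, min_eq_left hN]
    at htotal
  simp only [greedyFill_mul_greedyFill_succ, ← mul_sum]
  rw [sq, ← mul_add, htotal]

end GreedyFill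

def greedyConfig (c L N j : ℕ) : ℕ := if j ∈ Icc 1 L then greedyFill c N (j - 1) else 0

theorem greedyConfig_succ (c L N : ℕ) {i : ℕ} (hi : i < L) :
    greedyConfig c L N (i + 1) = greedyFill c N i := by
  rw [greedyConfig, if_pos (mem_Icc.2 ⟨by omega, hi⟩), add_tsub_cancel_right]

theorem memMLN_greedyConfig (c L N : ℕ) (hN : N ≤ c * L) :
    memMLN c L N (greedyConfig c L N) := by
  refine ⟨fun j => ?_, fun j hj => if_neg hj, ?_⟩
  · unfold greedyConfig greedyFill
    split_ifs <;> omega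
  · rw [sum_Icc_one_eq_sum_range,
      sum_congr rfl fun i hi => greedyConfig_succ c L N (mem_range.1 hi),
      sum_range_greedyFill, min_eq_left hN]

theorem sum_greedyConfig_mul_succ_add_sq {c n N : ℕ} (hcN : c ≤ N) (hN : N ≤ c * (n + 1)) :
    ∑ i ∈ range n, greedyConfig c (n + 1) N (i + 1) * greedyConfig c (n + 1) N (i + 2) + c ^ 2 =
      c * N := by
  rw [← sum_range_greedyFill_mul_succ c N hcN hN]
  congr 1
  refine sum_congr rfl fun i hi => ?_
  have hi : i < n := mem_range.1 hi
  rw [greedyConfig_succ _ _ _ (by omega), greedyConfig_succ _ _ _ (by omega)]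

theorem sum_mul_succ_add_sq_le_of_memMLN {c n N : ℕ} {m : ℕ → ℕ}
    (hm : memMLN c (n + 1) N m) (hN : 2 * c ≤ N) :
    ∑ i ∈ range n, m (i + 1) * m (i + 2) + c ^ 2 ≤ c * N := by
  obtain ⟨hle, -, hsum⟩ := hm
  rw [sum_Icc_one_eq_sum_range] at hsum
  have hbound := sum_range_mul_succ_add_sq_le (fun i => m (i + 1)) n (fun i => hle _) (hsum ▸ hN)
  rwa [hsum] at hbound

theorem potV_succ (c n : ℕ) (m : ℕ → ℕ) :
    potV c (n + 1) m =
      c * ((∑ i ∈ range (n + 1), m (i + 1) : ℕ) : ℝ) -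
        ((∑ i ∈ range n, m (i + 1) * m (i + 2) : ℕ) : ℝ) := by
  have h₁ := sum_range_succ (fun i => (m (i + 1) : ℝ)) n
  have h₂ := sum_range_succ' (fun i => (m (i + 1) : ℝ)) n
  rw [zero_add] at h₂
  push_cast
  rw [potV, add_tsub_cancel_right, sum_Icc_one_eq_sum_range, sum_sub_distrib, ← mul_sum,
    sum_add_distrib]
  linear_combination -(c / 2 : ℝ) * (h₁ + h₂)

theorem potV_of_sum_eq {c n N : ℕ} {m : ℕ → ℕ} (hsum : ∑ j ∈ Icc 1 (n + 1), m j = N) :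
    potV c (n + 1) m = c * N - ((∑ i ∈ range n, m (i + 1) * m (i + 2) : ℕ) : ℝ) := by
  rw [potV_succ, ← sum_Icc_one_eq_sum_range, hsum]

theorem min_potential_eq_general (twoJ L N : ℕ) (hL : 2 ≤ L)
    (hN1 : 2 * twoJ ≤ N) (hN2 : N ≤ twoJ * L) :
    IsLeast ((fun m => potV twoJ L m) '' {m | memMLN twoJ L N m}) ((twoJ : ℝ) ^ 2) := by
  obtain ⟨n, rfl⟩ : ∃ n, L = n + 1 := ⟨L - 1, by omega⟩
  have hmem := memMLN_greedyConfig twoJ (n + 1) N hN2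
  refine ⟨⟨greedyConfig twoJ (n + 1) N, hmem, ?_⟩, ?_⟩
  · dsimp only
    rw [potV_of_sum_eq hmem.2.2, sub_eq_iff_eq_add']
    exact_mod_cast (sum_greedyConfig_mul_succ_add_sq (by omega) hN2).symm
  · rintro _ ⟨m, hm, rfl⟩
    dsimp only
    rw [potV_of_sum_eq hm.2.2, le_sub_iff_add_le']
    exact_mod_cast sum_mul_succ_add_sq_le_of_memMLN hm hN1

/-- for `4J ≤ N ≤ 2JL` the minimum of the potential over `M_L^N`
equals `4J² = (2J)²`. -/
theorem min_potential_eq (twoJ L N : ℕ) (h2J : 0 < twoJ) (hL : 2 ≤ L)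
    (hN1 : 2 * twoJ ≤ N) (hN2 : N ≤ twoJ * L) :
    IsLeast ((fun m => potV twoJ L m) '' {m | memMLN twoJ L N m}) ((twoJ : ℝ) ^ 2) :=
  min_potential_eq_general twoJ L N hL hN1 hN2
end

section
/- For any two configurations X = (x_1,…,x_N) and Y = (y_1,…,y_N) in S_L^N, the graph distance between X and Y in the configuration graph equals ∑_{i=1}^{N} |x_i − y_i|; in particular any two configurations in S_L^N are connected by a path in the configuration graph. -/
open scoped Classical

/-- The occupation function `m_X : {1,…,L} → ℕ` of a tuple `X` with values in `Fin L`
(site `j ∈ {1,…,L}` corresponds to `⟨j-1⟩ : Fin L`): `m_X(j) = #{i : x_i = j}`. -/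
noncomputable def occt {L N : ℕ} (X : Fin N → Fin L) : ℕ → ℕ :=
  fun s => (Finset.univ.filter (fun i => (X i : ℕ) + 1 = s)).card

/-- `X ∈ S_L^N`: nondecreasing and no site occupied by more than `2J` particles
(`x_{k+2J} − x_k ≥ 1`). -/
def isConf (twoJ : ℕ) {L N : ℕ} (X : Fin N → Fin L) : Prop :=
  Monotone X ∧ ∀ (k : ℕ) (hk : k < N) (h : k + twoJ < N),
    (X ⟨k, hk⟩ : ℕ) + 1 ≤ (X ⟨k + twoJ, h⟩ : ℕ)

/-- The set `S_L^N` as a finset. -/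
noncomputable def confs (twoJ L N : ℕ) : Finset (Fin N → Fin L) :=
  Finset.univ.filter (fun X => isConf twoJ X)

/-- `d^N(X,Y) = ∑ᵢ |xᵢ − yᵢ|`. -/
def tdist {L N : ℕ} (X Y : Fin N → Fin L) : ℕ :=
  ∑ i, (((X i : ℕ) : ℤ) - ((Y i : ℕ) : ℤ)).natAbs

/-- The configuration graph on `S_L^N`, with edges given by single-particle hops. -/
def confGraph (twoJ L N : ℕ) : SimpleGraph {X : Fin N → Fin L // X ∈ confs twoJ L N} where
  Adj X Y := adjC L (occt X.1) (occt Y.1)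
  symm := by
    constructor
    rintro X Y ⟨j₀, hj, hc, hr⟩
    exact ⟨j₀, hj, by omega, fun j h1 h2 => (hr j h1 h2).symm⟩
  loopless := by
    constructor
    rintro X ⟨j₀, hj, hc, hr⟩
    omega

/-! A monotone tuple is encoded by its cumulative counts `occBelow X s`, the number of particles
on the sites `1, …, s`: then `i < occBelow X s ↔ xᵢ < s`, and counting the pairs `(i, s)` on
which this differs for `X` and `Y` gives `∑ᵢ |xᵢ − yᵢ| = ∑ₛ |occBelow X s − occBelow Y s|`.
A hop across the bond `(j₀, j₀ + 1)` changes only the cumulative count at `j₀`, and by one, so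
adjacent configurations are at distance one and no walk is shorter than `∑ᵢ |xᵢ − yᵢ|`.
Conversely, if `yᵢ < xᵢ` for some `i`, take the least such `i` and move `xᵢ` one site down: the
particles before it satisfy `xⱼ ≤ yⱼ`, so the exclusion constraint of `Y` is inherited by the
new tuple, which is therefore a configuration one step closer to `Y`. Otherwise make the same
move from `Y` towards `X`. -/

open Finset Function

theorem sum_apply_update_add {ι α M : Type*} [Fintype ι] [DecidableEq ι] [AddCommMonoid M]
    (g : ι → α → M) (x : ι → α) (i : ι) (a : α) :
    ∑ j, g j (update x i a j) + g i (x i) = ∑ j, g j (x j) + g i a := by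
  rw [← sum_erase_add _ _ (mem_univ i), ← sum_erase_add _ _ (mem_univ i), update_self,
    add_right_comm, sum_congr rfl fun j hj => by rw [update_of_ne (ne_of_mem_erase hj)]]

theorem Fin.mem_iff_lt_card_of_isLowerSet {n : ℕ} {s : Finset (Fin n)}
    (hs : IsLowerSet (s : Set (Fin n))) (i : Fin n) : i ∈ s ↔ (i : ℕ) < #s := by
  constructor
  · intro hi
    have := card_le_card fun j (hj : j ∈ Iic i) => hs (mem_Iic.mp hj) hi
    rw [Fin.card_Iic] at this
    omega
  · intro h
    by_contra hi
    have := card_le_card fun j (hj : j ∈ s) => mem_Iio.mpr (lt_of_not_ge fun hij => hi (hs hij hj))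
    rw [Fin.card_Iio] at this
    omega

theorem natAbs_sub_eq_card_filter_lt_ne_lt {a b L : ℕ} (ha : a < L) (hb : b < L) :
    ((a : ℤ) - b).natAbs = #{s ∈ range L | (a < s) ≠ (b < s)} := by
  rw [show {s ∈ range L | (a < s) ≠ (b < s)} = Ioc (min a b) (max a b) by ext; simp; omega,
    Nat.card_Ioc]
  omega

theorem Fin.card_filter_lt_ne_lt {a b N : ℕ} (ha : a ≤ N) (hb : b ≤ N) :
    #{i : Fin N | ((i : ℕ) < a) ≠ ((i : ℕ) < b)} = ((a : ℤ) - b).natAbs := by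
  rw [card_filter, Fin.sum_univ_eq_sum_range (fun i => if (i < a) ≠ (i < b) then 1 else 0),
    ← card_filter, show {i ∈ range N | (i < a) ≠ (i < b)} = Ico (min a b) (max a b) by
      ext; simp; omega, Nat.card_Ico]
  omega

theorem eq_ite_of_dipole_increments {D d : ℕ → ℤ} {j₀ : ℕ} (hj₀ : 1 ≤ j₀) (h0 : D 0 = 0)
    (hD : ∀ s, D (s + 1) = D s + d (s + 1)) (hd : ∀ t, t ≠ j₀ → t ≠ j₀ + 1 → d t = 0)
    (hcancel : d j₀ + d (j₀ + 1) = 0) (s : ℕ) : D s = if s = j₀ then d j₀ else 0 := by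
  induction s with
  | zero => rw [h0, if_neg (by omega)]
  | succ s ih =>
    rw [hD, ih]
    split_ifs with hs hs' hs'
    · omega
    · rw [hs, hcancel]
    · rw [hs', zero_add]
    · rw [zero_add, hd _ hs' (by omega)]

section
variable {twoJ L N : ℕ}

noncomputable def occBelow (X : Fin N → Fin L) (s : ℕ) : ℕ := #{i | (X i : ℕ) < s}

theorem occBelow_zero (X : Fin N → Fin L) : occBelow X 0 = 0 := by
  simp [occBelow]

theorem occBelow_succ (X : Fin N → Fin L) (s : ℕ) :
    occBelow X (s + 1) = occBelow X s + occt X (s + 1) := by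
  rw [occBelow, occBelow, occt,
    ← card_union_of_disjoint (disjoint_filter.mpr fun _ _ _ => by omega), ← filter_or]
  congr 1
  ext
  simp only [mem_filter, mem_univ, true_and]
  omega

theorem occBelow_le (X : Fin N → Fin L) (s : ℕ) : occBelow X s ≤ N :=
  (card_filter_le _ _).trans_eq (card_fin N)

theorem Monotone.lt_iff_lt_occBelow {X : Fin N → Fin L} (hX : Monotone X) (i : Fin N) (s : ℕ) :
    (X i : ℕ) < s ↔ (i : ℕ) < occBelow X s := by
  have hlower : IsLowerSet (({j | (X j : ℕ) < s} : Finset (Fin N)) : Set (Fin N)) := by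
    intro a b hba ha
    simp only [coe_filter, mem_univ, true_and, Set.mem_ofPred_eq] at ha ⊢
    exact lt_of_le_of_lt (hX hba) ha
  simpa [occBelow] using Fin.mem_iff_lt_card_of_isLowerSet hlower i

theorem tdist_eq_sum_occBelow {X Y : Fin N → Fin L} (hX : Monotone X) (hY : Monotone Y) :
    tdist X Y = ∑ s ∈ range L, ((occBelow X s : ℤ) - occBelow Y s).natAbs := by
  calc tdist X Y = ∑ i, ∑ s ∈ range L, if ((X i : ℕ) < s) ≠ ((Y i : ℕ) < s) then 1 else 0 := by
        refine sum_congr rfl fun i _ => ?_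
        rw [natAbs_sub_eq_card_filter_lt_ne_lt (X i).isLt (Y i).isLt, card_filter]
    _ = ∑ s ∈ range L, ∑ i : Fin N,
          if ((i : ℕ) < occBelow X s) ≠ ((i : ℕ) < occBelow Y s) then 1 else 0 := by
        rw [sum_comm]
        simp only [hX.lt_iff_lt_occBelow, hY.lt_iff_lt_occBelow]
    _ = _ := by
        refine sum_congr rfl fun s _ => ?_
        rw [← card_filter, Fin.card_filter_lt_ne_lt (occBelow_le X s) (occBelow_le Y s)]

theorem tdist_eq_one_of_adjC {X Y : Fin N → Fin L} (hX : Monotone X) (hY : Monotone Y)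
    (h : adjC L (occt X) (occt Y)) : tdist X Y = 1 := by
  obtain ⟨j₀, hj₀, hjump, hrest⟩ := h
  rw [mem_Icc] at hj₀
  set d : ℕ → ℤ := fun t => occt X t - occt Y t
  have hD (s : ℕ) : (occBelow X s : ℤ) - occBelow Y s = if s = j₀ then d j₀ else 0 :=
    eq_ite_of_dipole_increments (D := fun s => (occBelow X s : ℤ) - occBelow Y s) hj₀.1
      (by simp [occBelow_zero]) (fun s => by simp only [occBelow_succ, d]; push_cast; ring)
      (fun t h₁ h₂ => by simp [d, hrest t h₁ h₂]) (by simp only [d]; omega) s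
  calc tdist X Y = ∑ s ∈ range L, if s = j₀ then (d j₀).natAbs else 0 := by
        rw [tdist_eq_sum_occBelow hX hY]
        exact sum_congr rfl fun s _ => by rw [hD, apply_ite Int.natAbs, Int.natAbs_zero]
    _ = 1 := by
        rw [sum_ite_eq' _ _ (fun _ => (d j₀).natAbs), if_pos (mem_range.mpr (by omega))]
        simp only [d]
        omega

theorem tdist_comm (X Y : Fin N → Fin L) : tdist X Y = tdist Y X :=
  sum_congr rfl fun i _ => by rw [← Int.natAbs_neg, neg_sub]

theorem tdist_triangle (X Y Z : Fin N → Fin L) : tdist X Z ≤ tdist X Y + tdist Y Z := by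
  rw [tdist, tdist, tdist, ← sum_add_distrib]
  exact sum_le_sum fun i _ => (congrArg Int.natAbs (sub_add_sub_cancel _ _ _).symm).trans_le
    (Int.natAbs_add_le _ _)

theorem tdist_eq_zero_iff {X Y : Fin N → Fin L} : tdist X Y = 0 ↔ X = Y := by
  simp [tdist, sum_eq_zero_iff, sub_eq_zero, funext_iff, Fin.ext_iff]

theorem tdist_update_add (X Y : Fin N → Fin L) (i : Fin N) (z : Fin L) :
    tdist (update X i z) Y + (((X i : ℕ) : ℤ) - (Y i : ℕ)).natAbs =
      tdist X Y + (((z : ℕ) : ℤ) - (Y i : ℕ)).natAbs :=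
  sum_apply_update_add (fun j (a : Fin L) => (((a : ℕ) : ℤ) - (Y j : ℕ)).natAbs) X i z

theorem occt_update_add (X : Fin N → Fin L) (i : Fin N) (z : Fin L) (s : ℕ) :
    occt (update X i z) s + (if (X i : ℕ) + 1 = s then 1 else 0) =
      occt X s + (if (z : ℕ) + 1 = s then 1 else 0) := by
  simp only [occt, card_filter]
  exact sum_apply_update_add (fun _ (a : Fin L) => if (a : ℕ) + 1 = s then 1 else 0) X i z

theorem isConf_iff {X : Fin N → Fin L} :
    isConf twoJ X ↔ ∀ j k : Fin N, (j ≤ k → X j ≤ X k) ∧ ((j : ℕ) + twoJ ≤ k → X j < X k) := by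
  constructor
  · rintro ⟨hmono, hgap⟩ j k
    refine ⟨fun h => hmono h, fun h => ?_⟩
    have hk : (j : ℕ) + twoJ < N := by omega
    exact Fin.lt_def.mpr ((hgap j j.isLt hk).trans (Fin.le_def.mp (hmono (Fin.le_def.mpr h))))
  · intro H
    exact ⟨fun j k h => (H j k).1 h,
      fun k hk h => Fin.lt_def.mp ((H ⟨k, hk⟩ ⟨k + twoJ, h⟩).2 le_rfl)⟩

theorem isConf_update {X : Fin N → Fin L} (hX : isConf twoJ X) {i : Fin N} {z : Fin L}
    (hbelow : ∀ j < i, X j ≤ z ∧ ((j : ℕ) + twoJ ≤ i → X j < z))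
    (habove : ∀ k, i < k → z ≤ X k ∧ ((i : ℕ) + twoJ ≤ k → z < X k)) :
    isConf twoJ (update X i z) := by
  rw [isConf_iff] at hX ⊢
  intro j k
  by_cases hj : j = i <;> by_cases hk : k = i
  · rw [hj, hk, update_self]
    exact ⟨fun _ => le_rfl, fun h => (lt_irrefl _ ((hX i i).2 h)).elim⟩
  · rw [hj, update_self, update_of_ne hk]
    exact ⟨fun h => (habove k (lt_of_le_of_ne h (Ne.symm hk))).1,
      fun h => (habove k (lt_of_le_of_ne (Fin.le_def.mpr (by omega)) (Ne.symm hk))).2 h⟩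
  · rw [hk, update_self, update_of_ne hj]
    exact ⟨fun h => (hbelow j (lt_of_le_of_ne h hj)).1,
      fun h => (hbelow j (lt_of_le_of_ne (Fin.le_def.mpr (by omega)) hj)).2 h⟩
  · rw [update_of_ne hj, update_of_ne hk]
    exact hX j k

theorem exists_adjC_tdist_succ_eq {X Y : Fin N → Fin L} (hX : isConf twoJ X) (hY : isConf twoJ Y)
    {i₀ : Fin N} (hi₀ : Y i₀ < X i₀) :
    ∃ Z, isConf twoJ Z ∧ adjC L (occt X) (occt Z) ∧ tdist Z Y + 1 = tdist X Y := by
  obtain ⟨i, hi : Y i < X i, hmin⟩ := wellFounded_lt.has_min {j | Y j < X j} ⟨i₀, hi₀⟩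
  have hXY (j : Fin N) (hj : j < i) : X j ≤ Y j := not_lt.mp fun h => hmin j h hj
  have hXi := Fin.lt_def.mp hi
  set z : Fin L := ⟨X i - 1, by omega⟩
  have hz : (z : ℕ) + 1 = X i := by simp only [z]; omega
  have hYz : Y i ≤ z := Fin.le_def.mpr (by omega)
  have hzX : z < X i := Fin.lt_def.mpr (by omega)
  refine ⟨update X i z, isConf_update hX (fun j hj => ?_) (fun k hk => ?_), ?_, ?_⟩
  · have hY' := (isConf_iff.mp hY j i)
    exact ⟨(hXY j hj).trans ((hY'.1 hj.le).trans hYz),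
      fun h => (hXY j hj).trans_lt ((hY'.2 h).trans_le hYz)⟩
  · have hXk := (isConf_iff.mp hX i k).1 hk.le
    exact ⟨(hzX.trans_le hXk).le, fun _ => hzX.trans_le hXk⟩
  · refine ⟨X i, mem_Icc.mpr ⟨by omega, by omega⟩, Or.inr ⟨?_, ?_⟩, fun s h₁ h₂ => ?_⟩
    · have := occt_update_add X i z (X i)
      split_ifs at this <;> omega
    · have := occt_update_add X i z (X i + 1)
      split_ifs at this <;> omega
    · have := occt_update_add X i z s
      split_ifs at this <;> omega
  · have := tdist_update_add X Y i z
    omega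

theorem mem_confs {X : Fin N → Fin L} : X ∈ confs twoJ L N ↔ isConf twoJ X := by
  simp [confs]

theorem tdist_le_length {X Y : {X : Fin N → Fin L // X ∈ confs twoJ L N}}
    (p : (confGraph twoJ L N).Walk X Y) : tdist X.1 Y.1 ≤ p.length := by
  induction p with
  | nil => simp [tdist_eq_zero_iff]
  | @cons u v w huv p ih =>
    have h₁ := tdist_eq_one_of_adjC (mem_confs.mp u.2).1 (mem_confs.mp v.2).1 huv
    have h₂ := tdist_triangle u.1 v.1 w.1
    rw [SimpleGraph.Walk.length_cons]
    omega

theorem exists_adj_tdist_succ_eq {X Y : {X : Fin N → Fin L // X ∈ confs twoJ L N}} {i : Fin N}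
    (hi : Y.1 i < X.1 i) : ∃ Z, (confGraph twoJ L N).Adj X Z ∧ tdist Z.1 Y.1 + 1 = tdist X.1 Y.1 :=
  let ⟨Z, hZ, hadj, hd⟩ := exists_adjC_tdist_succ_eq (mem_confs.mp X.2) (mem_confs.mp Y.2) hi
  ⟨⟨Z, mem_confs.mpr hZ⟩, hadj, hd⟩

theorem exists_walk_length_le_tdist (X Y : {X : Fin N → Fin L // X ∈ confs twoJ L N}) :
    ∃ p : (confGraph twoJ L N).Walk X Y, p.length ≤ tdist X.1 Y.1 := by
  induction hn : tdist X.1 Y.1 generalizing X Y with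
  | zero =>
    obtain rfl : X = Y := Subtype.ext (tdist_eq_zero_iff.mp hn)
    exact ⟨.nil, le_rfl⟩
  | succ n ih =>
    obtain ⟨i, hi⟩ : ∃ i, X.1 i ≠ Y.1 i :=
      Function.ne_iff.mp fun h => by rw [tdist_eq_zero_iff.mpr h] at hn; omega
    rcases hi.lt_or_gt with h | h
    · obtain ⟨Z, hadj, hd⟩ := exists_adj_tdist_succ_eq h
      obtain ⟨p, hp⟩ := ih X Z (by rw [tdist_comm] at hn ⊢; omega)
      exact ⟨p.concat hadj.symm, by rw [SimpleGraph.Walk.length_concat]; omega⟩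
    · obtain ⟨Z, hadj, hd⟩ := exists_adj_tdist_succ_eq h
      obtain ⟨p, hp⟩ := ih Z Y (by omega)
      exact ⟨.cons hadj p, by rw [SimpleGraph.Walk.length_cons]; omega⟩

end

theorem graph_dist_eq_sum_abs_general (twoJ L N : ℕ)
    (X Y : {X : Fin N → Fin L // X ∈ confs twoJ L N}) :
    (confGraph twoJ L N).Reachable X Y ∧
      (confGraph twoJ L N).dist X Y = tdist X.1 Y.1 := by
  obtain ⟨p, hp⟩ := exists_walk_length_le_tdist X Y
  have hreach : (confGraph twoJ L N).Reachable X Y := ⟨p⟩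
  obtain ⟨q, hq⟩ := hreach.exists_walk_length_eq_dist
  exact ⟨hreach, le_antisymm ((SimpleGraph.dist_le p).trans hp) (hq ▸ tdist_le_length q)⟩

/-- any two configurations in `S_L^N` are connected in the configuration graph,
and the graph distance equals `∑ᵢ |xᵢ − yᵢ|`. -/
theorem graph_dist_eq_sum_abs (twoJ L N : ℕ) (h2J : 0 < twoJ) (hL : 2 ≤ L)
    (X Y : {X : Fin N → Fin L // X ∈ confs twoJ L N}) :
    (confGraph twoJ L N).Reachable X Y ∧
      (confGraph twoJ L N).dist X Y = tdist X.1 Y.1 :=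
  graph_dist_eq_sum_abs_general twoJ L N X Y
end

section
/- Let N ∈ ℕ, c ∈ ℤ, γ > 0, and let C = (c, c+1, …, c+N−1). Then the sum over all strictly increasing N-tuples X = (x_1,…,x_N) ∈ ℤ^N of exp(−γ ∑_{i=1}^{N} |x_i − (c+i−1)|) is at most L_γ := (1 − e^{−γ})^{−1} (∏_{k=1}^{∞} (1 − e^{−kγ})^{−1})², and L_γ is finite. -/
/-!
With `q = e^{-γ}` and `y_i = x_i - c - i`, strict monotonicity of `x` says exactly that `y` is
nondecreasing, and the summand is `q^{∑ |y_i|}`. The positive parts `y_i⁺` and the reversed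
negative parts `y_{N-1-i}⁻` are two nondecreasing sequences in `ℕ^N` that together determine `y`,
i.e. two partitions with at most `N` parts. Peeling off the first value `a_0` of a nondecreasing
`a : Fin (n+1) → ℕ` costs the factor `q^{(n+1) a_0}`, so these partitions have generating function
at most `∏_{j ≤ N} (1 - q^j)^{-1}`. Hence the sum is at most `(∏_{k ≥ 1} (1 - q^k)^{-1})² ≤ L_γ`.
-/

open Finset
open scoped ENNReal

/-- `L_γ := (1 − e^{−γ})^{−1} (∏_{k=1}^{∞} (1 − e^{−kγ})^{−1})²`. -/
noncomputable def Lgamma (γ : ℝ) : ℝ :=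
  (1 - Real.exp (-γ))⁻¹ * (∏' k : ℕ, (1 - Real.exp (-(((k : ℝ) + 1) * γ)))⁻¹) ^ 2

theorem ENNReal.tsum_mul_tsum {α β : Type*} (f : α → ℝ≥0∞) (g : β → ℝ≥0∞) :
    (∑' a, f a) * ∑' b, g b = ∑' p : α × β, f p.1 * g p.2 := by
  rw [ENNReal.tsum_prod', ← ENNReal.tsum_mul_right]
  simp only [ENNReal.tsum_mul_left]

section MonotoneSequences

variable {n : ℕ}

def headAndRise (a : {a : Fin (n + 1) → ℕ // Monotone a}) :
    ℕ × {b : Fin n → ℕ // Monotone b} :=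
  (a.1 0, ⟨fun i => a.1 i.succ - a.1 0,
    fun _ _ hij => Nat.sub_le_sub_right (a.2 (Fin.succ_le_succ_iff.2 hij)) _⟩)

lemma headAndRise_injective : Function.Injective (headAndRise (n := n)) := by
  rintro ⟨a, ha⟩ ⟨b, hb⟩ h
  simp only [headAndRise, Prod.mk.injEq, Subtype.ext_iff, funext_iff] at h
  obtain ⟨h0, hrise⟩ := h
  refine Subtype.ext (funext fun i => Fin.cases h0 (fun i => ?_) i)
  dsimp only
  have := hrise i
  have := ha (Fin.zero_le i.succ)
  have := hb (Fin.zero_le i.succ)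
  omega

lemma sum_eq_headAndRise (a : {a : Fin (n + 1) → ℕ // Monotone a}) :
    ∑ i, a.1 i = (n + 1) * (headAndRise a).1 + ∑ i, (headAndRise a).2.1 i := by
  have hsplit : ∀ i : Fin n, a.1 i.succ = a.1 0 + (headAndRise a).2.1 i := fun i =>
    (Nat.add_sub_cancel' (a.2 (Fin.zero_le i.succ))).symm
  simp only [Fin.sum_univ_succ, hsplit, sum_add_distrib, sum_const, card_univ, Fintype.card_fin,
    smul_eq_mul]
  simp only [headAndRise]
  ring

variable (Q : ℝ≥0∞)

theorem tsum_pow_sum_monotone_le :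
    ∑' a : {a : Fin n → ℕ // Monotone a}, Q ^ ∑ i, a.1 i ≤ ∏ j ∈ range n, (1 - Q ^ (j + 1))⁻¹ := by
  induction n with
  | zero => simpa using Fintype.card_le_one_iff_subsingleton.2 inferInstance
  | succ n ih =>
    let g : ℕ × {b : Fin n → ℕ // Monotone b} → ℝ≥0∞ :=
      fun p => (Q ^ (n + 1)) ^ p.1 * Q ^ ∑ i, p.2.1 i
    have hweight : ∀ a, Q ^ ∑ i, a.1 i = g (headAndRise a) := fun a => by
      rw [sum_eq_headAndRise, pow_add, pow_mul]
    calc ∑' a : {a : Fin (n + 1) → ℕ // Monotone a}, Q ^ ∑ i, a.1 i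
        = ∑' a, g (headAndRise a) := tsum_congr hweight
      _ ≤ ∑' p, g p := ENNReal.tsum_comp_le_tsum_of_injective headAndRise_injective g
      _ = (∑' k : ℕ, (Q ^ (n + 1)) ^ k) * ∑' b : {b : Fin n → ℕ // Monotone b}, Q ^ ∑ i, b.1 i :=
        by rw [ENNReal.tsum_mul_tsum]
      _ ≤ (1 - Q ^ (n + 1))⁻¹ * ∏ j ∈ range n, (1 - Q ^ (j + 1))⁻¹ := by
        rw [ENNReal.tsum_geometric]
        gcongr
      _ = ∏ j ∈ range (n + 1), (1 - Q ^ (j + 1))⁻¹ := by rw [prod_range_succ, mul_comm]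

def posNegParts (y : {y : Fin n → ℤ // Monotone y}) :
    {a : Fin n → ℕ // Monotone a} × {a : Fin n → ℕ // Monotone a} :=
  (⟨fun i => (y.1 i).toNat, fun _ _ hij => Int.toNat_le_toNat (y.2 hij)⟩,
   ⟨fun i => (-y.1 i.rev).toNat,
    fun _ _ hij => Int.toNat_le_toNat (neg_le_neg (y.2 (Fin.rev_le_rev.2 hij)))⟩)

lemma posNegParts_injective : Function.Injective (posNegParts (n := n)) := by
  rintro ⟨y, hy⟩ ⟨z, hz⟩ h
  simp only [posNegParts, Prod.mk.injEq, Subtype.ext_iff, funext_iff] at h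
  refine Subtype.ext (funext fun i => ?_)
  dsimp only
  rw [← Int.toNat_sub_toNat_neg (y i), ← Int.toNat_sub_toNat_neg (z i), h.1 i,
    ← Fin.rev_rev i, h.2 i.rev]

lemma sum_natAbs_eq_posNegParts (y : {y : Fin n → ℤ // Monotone y}) :
    ∑ i, (y.1 i).natAbs = ∑ i, (posNegParts y).1.1 i + ∑ i, (posNegParts y).2.1 i := by
  simp only [posNegParts, ← Int.toNat_add_toNat_neg_eq_natAbs, sum_add_distrib]
  congr 1
  exact (Equiv.sum_comp Fin.revPerm fun i => (-y.1 i).toNat).symm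

theorem tsum_pow_sum_natAbs_monotone_le :
    ∑' y : {y : Fin n → ℤ // Monotone y}, Q ^ ∑ i, (y.1 i).natAbs
      ≤ (∏ j ∈ range n, (1 - Q ^ (j + 1))⁻¹) ^ 2 := by
  let g : {a : Fin n → ℕ // Monotone a} × {a : Fin n → ℕ // Monotone a} → ℝ≥0∞ :=
    fun p => (Q ^ ∑ i, p.1.1 i) * Q ^ ∑ i, p.2.1 i
  calc ∑' y : {y : Fin n → ℤ // Monotone y}, Q ^ ∑ i, (y.1 i).natAbs
      = ∑' y, g (posNegParts y) := tsum_congr fun y => by rw [sum_natAbs_eq_posNegParts, pow_add]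
    _ ≤ ∑' p, g p := ENNReal.tsum_comp_le_tsum_of_injective posNegParts_injective g
    _ = (∑' a : {a : Fin n → ℕ // Monotone a}, Q ^ ∑ i, a.1 i) ^ 2 := by
      rw [sq, ENNReal.tsum_mul_tsum]
    _ ≤ (∏ j ∈ range n, (1 - Q ^ (j + 1))⁻¹) ^ 2 := by gcongr; exact tsum_pow_sum_monotone_le Q

end MonotoneSequences

lemma monotone_sub_add_val_of_strictMono {N : ℕ} {X : Fin N → ℤ} (hX : StrictMono X) (c : ℤ) :
    Monotone fun i : Fin N => X i - (c + ((i : ℕ) : ℤ)) := by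
  rcases N with _ | N
  · exact fun i => i.elim0
  refine Fin.monotone_iff_le_succ.2 fun i => ?_
  have : X i.castSucc < X i.succ := hX Fin.castSucc_lt_succ
  simp only [Fin.val_succ, Fin.val_castSucc]
  push_cast
  omega

theorem tsum_pow_sum_natAbs_strictMono_le (Q : ℝ≥0∞) (N : ℕ) (c : ℤ) :
    ∑' X : {X : Fin N → ℤ // StrictMono X}, Q ^ ∑ i, (X.1 i - (c + (i : ℕ))).natAbs
      ≤ (∏ j ∈ range N, (1 - Q ^ (j + 1))⁻¹) ^ 2 := by
  let shift : {X : Fin N → ℤ // StrictMono X} → {y : Fin N → ℤ // Monotone y} := fun X =>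
    ⟨_, monotone_sub_add_val_of_strictMono X.2 c⟩
  have hshift : Function.Injective shift := fun X Y h => Subtype.ext <| funext fun i => by
    simpa [shift] using congrFun (congrArg Subtype.val h) i
  exact (ENNReal.tsum_comp_le_tsum_of_injective hshift fun y => Q ^ ∑ i, (y.1 i).natAbs).trans
    (tsum_pow_sum_natAbs_monotone_le Q)

theorem Real.prod_le_tprod_of_one_le {ι : Type*} {f : ι → ℝ} (hf : Multipliable f)
    (h : ∀ i, 1 ≤ f i) (s : Finset ι) : ∏ i ∈ s, f i ≤ ∏' i, f i :=
  ge_of_tendsto hf.hasProd <| Filter.eventually_atTop.2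
    ⟨s, fun _ hst => prod_mono_set_of_one_le h hst⟩

theorem summable_and_tsum_le_of_tsum_ofReal_le {ι : Type*} {f : ι → ℝ} {L : ℝ}
    (hf : ∀ i, 0 ≤ f i) (hL : 0 ≤ L) (h : ∑' i, ENNReal.ofReal (f i) ≤ ENNReal.ofReal L) :
    Summable f ∧ ∑' i, f i ≤ L := by
  have hfin : ∑' i, ENNReal.ofReal (f i) ≠ ∞ := ne_top_of_le_ne_top ENNReal.ofReal_ne_top h
  have hsum : Summable f := by
    simpa only [ENNReal.toReal_ofReal (hf _)] using ENNReal.summable_toReal hfin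
  refine ⟨hsum, ?_⟩
  rwa [← ENNReal.ofReal_tsum_of_nonneg hf hsum, ENNReal.ofReal_le_ofReal_iff hL] at h

section Geometric

variable {q : ℝ} (hq0 : 0 ≤ q) (hq1 : q < 1)
include hq0 hq1

lemma one_le_inv_one_sub_pow_succ (k : ℕ) : 1 ≤ (1 - q ^ (k + 1))⁻¹ :=
  (one_le_inv₀ (sub_pos.2 (pow_lt_one₀ hq0 hq1 k.succ_ne_zero))).2
    (sub_le_self _ (pow_nonneg hq0 _))

lemma multipliable_inv_one_sub_pow_succ : Multipliable fun k : ℕ => (1 - q ^ (k + 1))⁻¹ := by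
  have hbound : ∀ k : ℕ, (1 - q ^ (k + 1))⁻¹ - 1 ≤ q ^ k * (q * (1 - q)⁻¹) := fun k => by
    have hqk : q ^ (k + 1) ≤ q := pow_le_of_le_one hq0 hq1.le k.succ_ne_zero
    have h1 : 0 < 1 - q := sub_pos.2 hq1
    have h2 : 0 < 1 - q ^ (k + 1) := by linarith
    rw [pow_succ] at h2 hqk ⊢
    field_simp
    nlinarith [mul_nonneg (mul_nonneg (pow_nonneg hq0 k) hq0) (sub_nonneg.2 hqk)]
  have hsum : Summable fun k : ℕ => (1 - q ^ (k + 1))⁻¹ - 1 :=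
    ((summable_geometric_of_lt_one hq0 hq1).mul_right _).of_nonneg_of_le
      (fun k => sub_nonneg.2 (one_le_inv_one_sub_pow_succ hq0 hq1 k)) hbound
  simpa using Real.multipliable_one_add_of_summable hsum

lemma ofReal_prod_inv_one_sub_pow_succ (n : ℕ) :
    ENNReal.ofReal (∏ j ∈ range n, (1 - q ^ (j + 1))⁻¹)
      = ∏ j ∈ range n, (1 - ENNReal.ofReal q ^ (j + 1))⁻¹ := by
  rw [ENNReal.ofReal_prod_of_nonneg fun j _ =>
    zero_le_one.trans (one_le_inv_one_sub_pow_succ hq0 hq1 j)]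
  refine prod_congr rfl fun j _ => ?_
  rw [ENNReal.ofReal_inv_of_pos (sub_pos.2 (pow_lt_one₀ hq0 hq1 j.succ_ne_zero)),
    ENNReal.ofReal_sub _ (pow_nonneg hq0 _), ENNReal.ofReal_one, ENNReal.ofReal_pow hq0]

lemma sq_prod_range_inv_one_sub_pow_succ_le (n : ℕ) :
    (∏ j ∈ range n, (1 - q ^ (j + 1))⁻¹) ^ 2 ≤ (1 - q)⁻¹ * (∏' k : ℕ, (1 - q ^ (k + 1))⁻¹) ^ 2 := by
  have hprod := Real.prod_le_tprod_of_one_le (multipliable_inv_one_sub_pow_succ hq0 hq1)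
    (one_le_inv_one_sub_pow_succ hq0 hq1) (range n)
  have hnonneg : 0 ≤ ∏ j ∈ range n, (1 - q ^ (j + 1))⁻¹ :=
    prod_nonneg fun j _ => zero_le_one.trans (one_le_inv_one_sub_pow_succ hq0 hq1 j)
  refine (pow_le_pow_left₀ hnonneg hprod 2).trans (le_mul_of_one_le_left (sq_nonneg _) ?_)
  simpa using one_le_inv_one_sub_pow_succ hq0 hq1 0

theorem summable_and_tsum_pow_sum_natAbs_strictMono_le (N : ℕ) (c : ℤ) :
    Summable (fun X : {X : Fin N → ℤ // StrictMono X} =>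
      q ^ ∑ i, (X.1 i - (c + (i : ℕ))).natAbs) ∧
    ∑' X : {X : Fin N → ℤ // StrictMono X}, q ^ ∑ i, (X.1 i - (c + (i : ℕ))).natAbs
      ≤ (1 - q)⁻¹ * (∏' k : ℕ, (1 - q ^ (k + 1))⁻¹) ^ 2 := by
  refine summable_and_tsum_le_of_tsum_ofReal_le (fun X => pow_nonneg hq0 _)
    (mul_nonneg (inv_nonneg.2 (sub_nonneg.2 hq1.le)) (sq_nonneg _)) ?_
  calc ∑' X : {X : Fin N → ℤ // StrictMono X},
        ENNReal.ofReal (q ^ ∑ i, (X.1 i - (c + (i : ℕ))).natAbs)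
      = ∑' X : {X : Fin N → ℤ // StrictMono X},
        ENNReal.ofReal q ^ ∑ i, (X.1 i - (c + (i : ℕ))).natAbs := by
        simp only [ENNReal.ofReal_pow hq0]
    _ ≤ (∏ j ∈ range N, (1 - ENNReal.ofReal q ^ (j + 1))⁻¹) ^ 2 :=
        tsum_pow_sum_natAbs_strictMono_le _ N c
    _ = ENNReal.ofReal ((∏ j ∈ range N, (1 - q ^ (j + 1))⁻¹) ^ 2) := by
        rw [ENNReal.ofReal_pow (prod_nonneg fun j _ =>
            zero_le_one.trans (one_le_inv_one_sub_pow_succ hq0 hq1 j)),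
          ofReal_prod_inv_one_sub_pow_succ hq0 hq1]
    _ ≤ ENNReal.ofReal ((1 - q)⁻¹ * (∏' k : ℕ, (1 - q ^ (k + 1))⁻¹) ^ 2) :=
        ENNReal.ofReal_le_ofReal (sq_prod_range_inv_one_sub_pow_succ_le hq0 hq1 N)

end Geometric

/-- the infinite product in `L_γ` converges, and the sum over all strictly
increasing `N`-tuples `X ∈ ℤ^N` of `exp(−γ ∑ᵢ |xᵢ − (c+i−1)|)` converges and is at most `L_γ`. -/
theorem sum_exp_dist_to_consecutive_le (N : ℕ) (c : ℤ) (γ : ℝ) (hγ : 0 < γ) :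
    Multipliable (fun k : ℕ => (1 - Real.exp (-(((k : ℝ) + 1) * γ)))⁻¹) ∧
    Summable (fun X : {X : Fin N → ℤ // StrictMono X} =>
      Real.exp (-γ * ∑ i, (((X.1 i - (c + (i : ℕ))).natAbs : ℝ)))) ∧
    (∑' X : {X : Fin N → ℤ // StrictMono X},
        Real.exp (-γ * ∑ i, (((X.1 i - (c + (i : ℕ))).natAbs : ℝ)))) ≤ Lgamma γ := by
  set q := Real.exp (-γ) with hq
  have hq0 : 0 ≤ q := (Real.exp_pos _).le
  have hq1 : q < 1 := Real.exp_lt_one_iff.2 (neg_lt_zero.2 hγ)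
  have hfactor : ∀ k : ℕ, Real.exp (-(((k : ℝ) + 1) * γ)) = q ^ (k + 1) := fun k => by
    rw [hq, ← Real.exp_nat_mul]
    push_cast
    ring_nf
  have hweight : ∀ n : ℕ, Real.exp (-γ * n) = q ^ n := fun n => by
    rw [mul_comm, Real.exp_nat_mul]
  simp only [Lgamma, hfactor, ← hq, ← Nat.cast_sum, hweight]
  exact ⟨multipliable_inv_one_sub_pow_succ hq0 hq1,
    summable_and_tsum_pow_sum_natAbs_strictMono_le hq0 hq1 N c⟩
end

section
/- Let Δ > 2J, K ∈ ℕ, δ ∈ (0,1), N ∈ {1,…,2JL}, let W be a diagonal matrix on ℂ^{S_L^N} with nonnegative entries, and set γ = (1 − 2J/Δ)K and E_{K,δ/2} = (1 − 2J/Δ)(K + 1 − δ/2). Then for every E ∈ [0, E_{K,δ/2}] and every f : S_L^N → ℂ, ⟨f, (H_N + W + γ P_{S_{L,K}^N} − E) f⟩ ≥ (1 − 2J/Δ) · (δ/(2(K+1))) · ⟨f, V_N f⟩; in particular H_N + W + γ P_{S_{L,K}^N} − E is positive definite. -/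
open scoped Classical ComplexOrder
open Matrix

/-- The index type `S_L^N`. -/
abbrev Conf (twoJ L N : ℕ) := {X : Fin N → Fin L // X ∈ confs twoJ L N}

/-- The Hamiltonian `H_N = −(1/(2Δ)) A_N + V_N` on `ℂ^{S_L^N}`. -/
noncomputable def Ham (twoJ L N : ℕ) (Δ : ℝ) : Matrix (Conf twoJ L N) (Conf twoJ L N) ℂ :=
  fun X Y =>
    (if adjC L (occt X.1) (occt Y.1)
      then -(1 / (2 * (Δ : ℂ))) * ((wt twoJ L (occt X.1) (occt Y.1) : ℝ) : ℂ) else 0)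
    + (if X = Y then ((potV twoJ L (occt X.1) : ℝ) : ℂ) else 0)

/-- The diagonal matrix `V_N`. -/
noncomputable def Vdiag (twoJ L N : ℕ) : Matrix (Conf twoJ L N) (Conf twoJ L N) ℂ :=
  Matrix.diagonal (fun X => ((potV twoJ L (occt X.1) : ℝ) : ℂ))

/-- The orthogonal projection `P_{S_{L,K}^N}` onto configurations with `V(X) ≤ K`. -/
noncomputable def projLK (twoJ L N K : ℕ) : Matrix (Conf twoJ L N) (Conf twoJ L N) ℂ :=
  Matrix.diagonal (fun X => if potV twoJ L (occt X.1) ≤ (K : ℝ) then (1 : ℂ) else 0)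


/-!
Write `H_N = V_N - (2Δ)⁻¹ A_N` with `A_N` the symmetric, nonnegative hopping matrix. A hop from a
site holding `a` particles to a neighbour holding `b` has weight at most `2J a (2J - b)`, so the
two hops across a bond weigh at most `4J` times its bond energy `J(a + b) - ab`, and the row sums
of `A_N` are at most `4J V`. By the Schur test `A_N ≤ 4J V_N`, hence `H_N ≥ (1 - 2J/Δ) V_N`, and
the operator in question dominates the diagonal matrix `(1 - 2J/Δ)V + W + γ 1[V ≤ K] - E`.
On configurations `V` is an integer and at least `1`, so either `V ≤ K` or `V ≥ K + 1`; in both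
cases, as `E ≤ (1 - 2J/Δ)(K + 1 - δ/2)`, that diagonal entry is at least
`(1 - 2J/Δ) δ V / (2(K + 1)) > 0`.
-/

open Finset ComplexConjugate

theorem Finset.sum_le_sum_of_forall_exists_eq {α β M : Type*} [AddCommMonoid M] [PartialOrder M]
    [IsOrderedAddMonoid M] {S : Finset α} {I : Finset β} (φ : β → α) {F : α → M} {G : β → M}
    (hG : ∀ p ∈ I, 0 ≤ G p) (h : ∀ n ∈ S, ∃ p ∈ I, φ p = n ∧ F n ≤ G p) :
    ∑ n ∈ S, F n ≤ ∑ p ∈ I, G p := by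
  rcases isEmpty_or_nonempty β with hβ | hβ
  · have hS : S = ∅ := eq_empty_of_forall_notMem fun n hn => isEmptyElim (h n hn).choose
    simpa [hS] using sum_nonneg hG
  choose! p hpI hφ hle using h
  calc ∑ n ∈ S, F n ≤ ∑ n ∈ S, G (p n) := sum_le_sum hle
    _ = ∑ k ∈ S.image p, G k :=
      (sum_image fun a ha b hb hab => by rw [← hφ a ha, ← hφ b hb, hab]).symm
    _ ≤ ∑ k ∈ I, G k :=
      sum_le_sum_of_subset_of_nonneg (image_subset_iff.2 hpI) fun k hk _ => hG k hk

theorem Complex.re_conj_mul_le (z w : ℂ) : (conj z * w).re ≤ (normSq z + normSq w) / 2 := by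
  simp only [mul_re, conj_re, conj_im, normSq_apply]
  nlinarith [sq_nonneg (z.re - w.re), sq_nonneg (z.im - w.im)]

theorem Complex.re_conj_mul_self (z : ℂ) : (conj z * z).re = normSq z := by
  rw [mul_comm, mul_conj, ofReal_re]

namespace Matrix

variable {ι : Type*}

theorem IsSymm.isHermitian_map_ofReal {B : Matrix ι ι ℝ} (hB : B.IsSymm) :
    (B.map ((↑) : ℝ → ℂ)).IsHermitian :=
  (isHermitian_iff_isSymm.2 hB).map _ fun x => (Complex.conj_ofReal x).symm

variable [Fintype ι]

theorem re_star_dotProduct_map_ofReal_mulVec (B : Matrix ι ι ℝ) (f : ι → ℂ) :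
    (star f ⬝ᵥ B.map ((↑) : ℝ → ℂ) *ᵥ f).re = ∑ i, ∑ j, B i j * (conj (f i) * f j).re := by
  simp only [dotProduct, mulVec, map_apply, Pi.star_apply, Complex.star_def, mul_sum,
    Complex.re_sum]
  exact sum_congr rfl fun i _ => sum_congr rfl fun j _ => by
    rw [mul_left_comm, Complex.re_ofReal_mul]

theorem re_star_dotProduct_diagonal_ofReal_mulVec [DecidableEq ι] (d : ι → ℝ) (f : ι → ℂ) :
    (star f ⬝ᵥ diagonal (fun i => (d i : ℂ)) *ᵥ f).re = ∑ i, d i * Complex.normSq (f i) := by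
  simp only [dotProduct, mulVec_diagonal, Pi.star_apply, Complex.star_def, Complex.re_sum]
  exact sum_congr rfl fun i _ => by
    rw [mul_left_comm, Complex.re_ofReal_mul, Complex.re_conj_mul_self]

/-- Schur test. -/
theorem sum_mul_re_conj_mul_le {B : Matrix ι ι ℝ} (hB : B.IsSymm) (hB0 : ∀ i j, 0 ≤ B i j)
    (f : ι → ℂ) :
    ∑ i, ∑ j, B i j * (conj (f i) * f j).re ≤ ∑ i, (∑ j, B i j) * Complex.normSq (f i) := by
  have hswap : ∑ i, ∑ j, B i j * Complex.normSq (f j) = ∑ i, ∑ j, B i j * Complex.normSq (f i) := by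
    rw [sum_comm]
    exact sum_congr rfl fun i _ => sum_congr rfl fun j _ => by rw [hB.apply i j]
  calc ∑ i, ∑ j, B i j * (conj (f i) * f j).re
      ≤ ∑ i, ∑ j, B i j * ((Complex.normSq (f i) + Complex.normSq (f j)) / 2) :=
        sum_le_sum fun i _ => sum_le_sum fun j _ =>
          mul_le_mul_of_nonneg_left (Complex.re_conj_mul_le _ _) (hB0 i j)
    _ = (∑ i, ∑ j, B i j * Complex.normSq (f i) + ∑ i, ∑ j, B i j * Complex.normSq (f j)) / 2 := by
        simp only [mul_div_assoc', mul_add, add_div, sum_add_distrib, sum_div]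
    _ = ∑ i, (∑ j, B i j) * Complex.normSq (f i) := by
        simp only [hswap, add_self_div_two, sum_mul]

theorem sum_sub_mul_normSq_le_re_star_dotProduct [DecidableEq ι] {a : Matrix ι ι ℝ}
    (ha : a.IsSymm) (ha0 : ∀ i j, 0 ≤ a i j) {c : ℝ} (hc : 0 ≤ c) {r : ι → ℝ}
    (hr : ∀ i, ∑ j, a i j ≤ r i) (d : ι → ℝ) (f : ι → ℂ) :
    ∑ i, (d i - c * r i) * Complex.normSq (f i)
      ≤ (star f ⬝ᵥ (diagonal d - c • a).map ((↑) : ℝ → ℂ) *ᵥ f).re := by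
  have hrow : ∀ i, ∑ j, (diagonal d - c • a) i j * (conj (f i) * f j).re
      = d i * Complex.normSq (f i) - c * ∑ j, a i j * (conj (f i) * f j).re := by
    intro i
    simp only [sub_apply, smul_apply, smul_eq_mul, diagonal_apply, sub_mul, sum_sub_distrib,
      ite_mul, zero_mul, sum_ite_eq, mem_univ, if_true, mul_assoc, ← mul_sum,
      Complex.re_conj_mul_self]
  have hrowsum : ∑ i, (∑ j, a i j) * Complex.normSq (f i) ≤ ∑ i, r i * Complex.normSq (f i) :=
    sum_le_sum fun i _ => mul_le_mul_of_nonneg_right (hr i) (Complex.normSq_nonneg _)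
  have hschur := mul_le_mul_of_nonneg_left ((sum_mul_re_conj_mul_le ha ha0 f).trans hrowsum) hc
  rw [re_star_dotProduct_map_ofReal_mulVec, sum_congr rfl fun i _ => hrow i, sum_sub_distrib,
    ← mul_sum]
  simp only [sub_mul, sum_sub_distrib, mul_assoc, ← mul_sum]
  linarith

theorem posDef_of_sum_mul_normSq_le {M : Matrix ι ι ℂ} (hM : M.IsHermitian) {e : ι → ℝ}
    (he : ∀ i, 0 < e i) (h : ∀ f, ∑ i, e i * Complex.normSq (f i) ≤ (star f ⬝ᵥ M *ᵥ f).re) :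
    M.PosDef := by
  refine posDef_iff_dotProduct_mulVec.2 ⟨hM, fun f hf => ?_⟩
  obtain ⟨i, hi⟩ := Function.ne_iff.1 hf
  have hpos : 0 < ∑ i, e i * Complex.normSq (f i) :=
    sum_pos' (fun j _ => mul_nonneg (he j).le (Complex.normSq_nonneg _))
      ⟨i, mem_univ i, mul_pos (he i) (Complex.normSq_pos.2 hi)⟩
  exact Complex.lt_def.2 ⟨hpos.trans_le (h f), (hM.im_star_dotProduct_mulVec_self f).symm⟩

end Matrix

theorem Conf.isConf {q L N : ℕ} (X : Conf q L N) : isConf q X.1 := (mem_filter.1 X.2).2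

/-- Indices `2J` apart carry different values, so each fibre of `X` lies in `2J` consecutive
indices. -/
theorem occt_le_of_isConf {q L N : ℕ} {X : Fin N → Fin L} (hX : isConf q X) (s : ℕ) :
    occt X s ≤ q := by
  set T := univ.filter fun i : Fin N => (X i : ℕ) + 1 = s
  rcases T.eq_empty_or_nonempty with hT | hT
  · exact (congrArg card hT).trans_le (Nat.zero_le q)
  set i₀ := T.min' hT
  have hi₀ : (X i₀ : ℕ) + 1 = s := (mem_filter.1 (T.min'_mem hT)).2
  have hmaps : ∀ i ∈ T, (i : ℕ) ∈ Ico (i₀ : ℕ) (i₀ + q) := by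
    intro i hi
    refine mem_Ico.2 ⟨T.min'_le i hi, ?_⟩
    by_contra! hge
    have hlt : (i₀ : ℕ) + q < N := lt_of_le_of_lt hge i.2
    have hgap := hX.2 i₀ i₀.2 hlt
    simp only [Fin.eta] at hgap
    have hmono := hX.1 (show (⟨i₀ + q, hlt⟩ : Fin N) ≤ i from hge)
    have hiT := (mem_filter.1 hi).2
    rw [Fin.le_def] at hmono
    omega
  calc occt X s = T.card := rfl
    _ ≤ (Ico (i₀ : ℕ) (i₀ + q)).card :=
      card_le_card_of_injOn (fun i => (i : ℕ)) hmaps Fin.val_injective.injOn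
    _ = q := by simp

theorem Monotone.eq_of_occt_eq {L N : ℕ} {X Y : Fin N → Fin L} (hX : Monotone X)
    (hY : Monotone Y) (h : occt X = occt Y) : X = Y := by
  have hcount : ∀ (Z : Fin N → Fin L) (a : Fin L),
      Multiset.count a (univ.val.map Z) = occt Z (a + 1) := by
    intro Z a
    rw [Multiset.count_map]
    exact congrArg Multiset.card (Multiset.filter_congr fun i _ => by rw [Fin.ext_iff]; omega)
  refine List.ofFn_injective (List.Perm.eq_of_sortedLE hX.sortedLE_ofFn hY.sortedLE_ofFn ?_)
  rw [← Multiset.coe_eq_coe, ← Fin.univ_val_map, ← Fin.univ_val_map]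
  exact Multiset.ext.2 fun a => by rw [hcount, hcount, h]

theorem occt_injective (q L N : ℕ) : Function.Injective fun X : Conf q L N => occt X.1 :=
  fun X Y h => Subtype.ext (X.isConf.1.eq_of_occt_eq Y.isConf.1 h)

noncomputable def bondEnergy (q a b : ℕ) : ℝ :=
  (q : ℝ) / 2 * ((a : ℝ) + (b : ℝ)) - (a : ℝ) * (b : ℝ)

theorem potV_eq_sum_bondEnergy (q L : ℕ) (m : ℕ → ℕ) :
    potV q L m = ∑ j ∈ Icc 1 (L - 1), bondEnergy q (m j) (m (j + 1))
      + (q : ℝ) / 2 * ((m 1 : ℝ) + (m L : ℝ)) := rfl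

theorem two_mul_bondEnergy (q a b : ℕ) :
    2 * bondEnergy q a b = a * ((q : ℝ) - b) + b * ((q : ℝ) - a) := by
  unfold bondEnergy; ring

theorem bondEnergy_nonneg {q a b : ℕ} (ha : a ≤ q) (hb : b ≤ q) : 0 ≤ bondEnergy q a b := by
  have hab : 0 ≤ (a : ℝ) * ((q : ℝ) - b) + b * ((q : ℝ) - a) := by
    have ha' : (a : ℝ) ≤ q := by exact_mod_cast ha
    have hb' : (b : ℝ) ≤ q := by exact_mod_cast hb
    positivity
  linarith [two_mul_bondEnergy q a b]

theorem sum_bondEnergy_le_potV (q L : ℕ) (m : ℕ → ℕ) :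
    ∑ j ∈ Icc 1 (L - 1), bondEnergy q (m j) (m (j + 1)) ≤ potV q L m := by
  rw [potV_eq_sum_bondEnergy]
  have : 0 ≤ (q : ℝ) / 2 * ((m 1 : ℝ) + (m L : ℝ)) := by positivity
  linarith

/-- Either the first site is occupied, and the boundary term is at least `J`, or the bond to the
left of the first occupied site has energy at least `J`. -/
theorem half_le_potV {q L : ℕ} {m : ℕ → ℕ} (hm : ∀ s, m s ≤ q) {s : ℕ} (hs : s ∈ Icc 1 L)
    (hms : 0 < m s) : (q : ℝ) / 2 ≤ potV q L m := by
  obtain ⟨hs1, hsL⟩ := mem_Icc.1 hs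
  have hex : ∃ k, 0 < m (k + 1) := ⟨s - 1, by rwa [Nat.sub_add_cancel hs1]⟩
  set k := Nat.find hex
  have hk : 0 < m (k + 1) := Nat.find_spec hex
  have hks : k ≤ s - 1 := Nat.find_min' hex (by rwa [Nat.sub_add_cancel hs1])
  have hbonds : 0 ≤ ∑ j ∈ Icc 1 (L - 1), bondEnergy q (m j) (m (j + 1)) :=
    sum_nonneg fun j _ => bondEnergy_nonneg (hm _) (hm _)
  have hboundary : 0 ≤ (q : ℝ) / 2 * ((m 1 : ℝ) + (m L : ℝ)) := by positivity
  rw [potV_eq_sum_bondEnergy]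
  rcases Nat.eq_zero_or_pos k with hk0 | hk0
  · have h1 : (1 : ℝ) ≤ m 1 := by rw [hk0] at hk; exact_mod_cast hk
    have : (q : ℝ) / 2 ≤ (q : ℝ) / 2 * ((m 1 : ℝ) + (m L : ℝ)) :=
      le_mul_of_one_le_right (by positivity) (by linarith [(m L).cast_nonneg (α := ℝ)])
    linarith
  · have hmk : m k = 0 := by
      have := Nat.find_min hex (show k - 1 < k by omega)
      rw [Nat.sub_add_cancel hk0] at this
      omega
    have hbond : (q : ℝ) / 2 ≤ bondEnergy q (m k) (m (k + 1)) := by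
      have : (1 : ℝ) ≤ m (k + 1) := by exact_mod_cast hk
      have : (0 : ℝ) ≤ q := Nat.cast_nonneg _
      rw [bondEnergy, hmk]
      push_cast
      nlinarith
    have hkmem : k ∈ Icc 1 (L - 1) := mem_Icc.2 ⟨hk0, by omega⟩
    have := single_le_sum (fun j _ => bondEnergy_nonneg (hm j) (hm (j + 1))) hkmem
    linarith

theorem sum_Icc_one_succ' {M : Type*} [AddCommMonoid M] (g : ℕ → M) (n : ℕ) :
    ∑ j ∈ Icc 1 n, g (j + 1) + g 1 = ∑ j ∈ Icc 1 (n + 1), g j := by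
  induction n with
  | zero => simp
  | succ n ih =>
    rw [sum_Icc_succ_top (by omega), sum_Icc_succ_top (by omega : 1 ≤ n + 1 + 1), ← ih,
      add_right_comm]

theorem potV_eq_mul_sum_sub_sum {L : ℕ} (hL : 0 < L) (q : ℕ) (m : ℕ → ℕ) :
    potV q L m = q * ∑ s ∈ Icc 1 L, (m s : ℝ) - ∑ j ∈ Icc 1 (L - 1), (m j : ℝ) * m (j + 1) := by
  obtain ⟨n, rfl⟩ : ∃ n, L = n + 1 := ⟨L - 1, by omega⟩
  have htop := sum_Icc_succ_top (by omega : 1 ≤ n + 1) fun s => (m s : ℝ)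
  have hbot := sum_Icc_one_succ' (fun s => (m s : ℝ)) n
  simp only [potV, Nat.add_sub_cancel, sum_sub_distrib, ← mul_sum, mul_add, sum_add_distrib]
  linear_combination (q : ℝ) / 2 * (hbot - htop)

theorem exists_potV_eq_intCast {L : ℕ} (hL : 0 < L) (q : ℕ) (m : ℕ → ℕ) :
    ∃ z : ℤ, potV q L m = z :=
  ⟨q * ∑ s ∈ Icc 1 L, (m s : ℤ) - ∑ j ∈ Icc 1 (L - 1), (m j : ℤ) * m (j + 1), by
    rw [potV_eq_mul_sum_sub_sum hL]; push_cast; ring⟩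

theorem one_le_potV_occt {q L N : ℕ} (hq : 0 < q) (hN : 0 < N) {X : Fin N → Fin L}
    (hX : isConf q X) : 1 ≤ potV q L (occt X) := by
  set i : Fin N := ⟨0, hN⟩
  have hocc : 0 < occt X (X i + 1) := card_pos.2 ⟨i, mem_filter.2 ⟨mem_univ i, rfl⟩⟩
  have hhalf := half_le_potV (occt_le_of_isConf hX) (mem_Icc.2 ⟨by omega, (X i).2⟩) hocc
  obtain ⟨z, hz⟩ := exists_potV_eq_intCast (X i).pos q (occt X)
  rw [hz] at hhalf ⊢
  have hz0 : 0 < z := Int.cast_pos.1 ((half_pos (Nat.cast_pos.2 hq)).trans_le hhalf)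
  exact_mod_cast hz0

theorem potV_occt_le_or_add_one_le {L N : ℕ} (hN : 0 < N) (q K : ℕ) (X : Fin N → Fin L) :
    potV q L (occt X) ≤ K ∨ (K : ℝ) + 1 ≤ potV q L (occt X) := by
  obtain ⟨z, hz⟩ := exists_potV_eq_intCast (X ⟨0, hN⟩).pos q (occt X)
  rw [hz]
  rcases le_or_gt z K with h | h
  · exact Or.inl (by exact_mod_cast h)
  · exact Or.inr (by exact_mod_cast h)

def hop (m : ℕ → ℕ) (s t : ℕ) : ℕ → ℕ :=
  Function.update (Function.update m s (m s - 1)) t (m t + 1)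

@[simp]
theorem hop_apply_target (m : ℕ → ℕ) (s t : ℕ) : hop m s t t = m t + 1 := by simp [hop]

@[simp]
theorem hop_apply_source (m : ℕ → ℕ) {s t : ℕ} (h : s ≠ t) : hop m s t s = m s - 1 := by
  simp [hop, h]

theorem adjC.exists_hop {L : ℕ} {m n : ℕ → ℕ} (h : adjC L m n) :
    ∃ j ∈ Icc 1 (L - 1),
      (0 < m j ∧ n = hop m j (j + 1)) ∨ (0 < m (j + 1) ∧ n = hop m (j + 1) j) := by
  obtain ⟨j, hj, hd, hrest⟩ := h
  refine ⟨j, hj, ?_⟩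
  rcases hd with ⟨h1, h2⟩ | ⟨h1, h2⟩
  · refine Or.inl ⟨by omega, funext fun s => ?_⟩
    simp only [hop, Function.update_apply]
    split_ifs with hs1 hs2 <;> subst_vars <;> first | omega | exact (hrest s hs2 hs1).symm
  · refine Or.inr ⟨by omega, funext fun s => ?_⟩
    simp only [hop, Function.update_apply]
    split_ifs with hs1 hs2 <;> subst_vars <;> first | omega | exact (hrest s hs1 hs2).symm

theorem wt_hop {q L : ℕ} {m : ℕ → ℕ} {s t : ℕ} (hs : s ∈ Icc 1 L) (ht : t ∈ Icc 1 L)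
    (hst : s ≠ t) (hms : 0 < m s) :
    wt q L m (hop m s t)
      = √((m s : ℝ) * ((q : ℝ) - m s + 1)) * √(((m t : ℝ) + 1) * ((q : ℝ) - m t)) := by
  have hchanged : (Icc 1 L).filter (fun k => m k ≠ hop m s t k) = {s, t} := by
    ext k
    simp only [mem_filter, mem_insert, mem_singleton, hop, Function.update_apply]
    constructor
    · rintro ⟨-, hk⟩
      by_contra! hne
      simp [hne.1, hne.2] at hk
    · rintro (rfl | rfl)
      · simp only [hs, hst, if_true, if_false, true_and]; omega
      · simp [ht]
  rw [wt, hchanged, prod_pair hst, hop_apply_source m hst, hop_apply_target,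
    Nat.cast_sub hms]
  push_cast
  congr 2 <;> ring

/-- Weight bound for the hop of a particle from a site holding `a` to one holding `b`:
`√(a(2J - a + 1)) √((b + 1)(2J - b)) ≤ 2J √(a(2J - b)) ≤ 2J a (2J - b)`. -/
theorem wt_hop_le {q L : ℕ} {m : ℕ → ℕ} {s t : ℕ} (hs : s ∈ Icc 1 L) (ht : t ∈ Icc 1 L)
    (hst : s ≠ t) (hms : 0 < m s) (hmt : m t < q) :
    wt q L m (hop m s t) ≤ q * m s * ((q : ℝ) - m t) := by
  rw [wt_hop hs ht hst hms]
  have ha : (1 : ℝ) ≤ m s := by exact_mod_cast hms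
  have hb : (m t : ℝ) + 1 ≤ q := by exact_mod_cast hmt
  have hb0 : (0 : ℝ) ≤ m t := Nat.cast_nonneg _
  have hsrc : (m s : ℝ) * ((q : ℝ) - m s + 1) ≤ m s * q := by nlinarith
  have htgt : ((m t : ℝ) + 1) * ((q : ℝ) - m t) ≤ q * ((q : ℝ) - m t) := by nlinarith
  have htgt0 : 0 ≤ ((m t : ℝ) + 1) * ((q : ℝ) - m t) := by nlinarith
  have hprod : (1 : ℝ) ≤ m s * ((q : ℝ) - m t) := by nlinarith
  rw [← Real.sqrt_mul' _ htgt0, Real.sqrt_le_left (by nlinarith)]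
  calc (m s : ℝ) * ((q : ℝ) - m s + 1) * (((m t : ℝ) + 1) * ((q : ℝ) - m t))
      ≤ m s * q * (q * ((q : ℝ) - m t)) :=
        mul_le_mul hsrc htgt htgt0 (by nlinarith)
    _ = (q : ℝ) ^ 2 * (m s * ((q : ℝ) - m t)) := by ring
    _ ≤ (q : ℝ) ^ 2 * (m s * ((q : ℝ) - m t)) ^ 2 := by gcongr; nlinarith
    _ = (q * m s * ((q : ℝ) - m t)) ^ 2 := by ring

theorem adjC.exists_hop_wt_le {q L : ℕ} {m n : ℕ → ℕ} (h : adjC L m n) (hn : ∀ s, n s ≤ q) :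
    ∃ j ∈ Icc 1 (L - 1),
      (n = hop m j (j + 1) ∧ wt q L m n ≤ q * m j * ((q : ℝ) - m (j + 1))) ∨
      (n = hop m (j + 1) j ∧ wt q L m n ≤ q * m (j + 1) * ((q : ℝ) - m j)) := by
  obtain ⟨j, hj, ⟨hmj, rfl⟩ | ⟨hmj, rfl⟩⟩ := h.exists_hop
  all_goals
    refine ⟨j, hj, ?_⟩
    have hj' := mem_Icc.1 hj
    have hsites : j ∈ Icc 1 L ∧ j + 1 ∈ Icc 1 L := ⟨mem_Icc.2 (by omega), mem_Icc.2 (by omega)⟩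
  · have hmt := hn (j + 1)
    rw [hop_apply_target] at hmt
    exact Or.inl ⟨rfl, wt_hop_le hsites.1 hsites.2 (by omega) hmj (by omega)⟩
  · have hmt := hn j
    rw [hop_apply_target] at hmt
    exact Or.inr ⟨rfl, wt_hop_le hsites.2 hsites.1 (by omega) hmj (by omega)⟩

theorem wt_comm_s7 (q L : ℕ) (m n : ℕ → ℕ) : wt q L m n = wt q L n m := by
  unfold wt
  rw [filter_congr fun j _ => ne_comm]
  exact prod_congr rfl fun j _ => by rw [add_comm (m j : ℝ), mul_comm (m j : ℝ)]

theorem adjC.symm {L : ℕ} {m n : ℕ → ℕ} (h : adjC L m n) : adjC L n m := by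
  obtain ⟨j, hj, hd, hrest⟩ := h
  exact ⟨j, hj, by omega, fun s h1 h2 => (hrest s h1 h2).symm⟩


/-- The hopping matrix `A_N`, so that `H_N = V_N - (2Δ)⁻¹ A_N`. -/
noncomputable def hopMatrix (q L N : ℕ) : Matrix (Conf q L N) (Conf q L N) ℝ :=
  fun X Y => if adjC L (occt X.1) (occt Y.1) then wt q L (occt X.1) (occt Y.1) else 0

theorem hopMatrix_nonneg (q L N : ℕ) (X Y : Conf q L N) : 0 ≤ hopMatrix q L N X Y := by
  unfold hopMatrix
  split_ifs
  exacts [prod_nonneg fun _ _ => Real.sqrt_nonneg _, le_rfl]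

theorem hopMatrix_isSymm (q L N : ℕ) : (hopMatrix q L N).IsSymm :=
  IsSymm.ext fun X Y => by
    simp only [hopMatrix, wt_comm_s7 q L (occt Y.1)]
    exact if_congr ⟨adjC.symm, adjC.symm⟩ rfl rfl

/-- Each bond carries at most two hops, whose weights add up to at most `4J` times its bond
energy. -/
theorem sum_hopMatrix_le (q L N : ℕ) (X : Conf q L N) :
    ∑ Y, hopMatrix q L N X Y ≤ 2 * q * potV q L (occt X.1) := by
  set m := occt X.1
  have hm : ∀ s, m s ≤ q := occt_le_of_isConf X.isConf
  have hq : ∀ s, 0 ≤ (q : ℝ) - m s := fun s => sub_nonneg.2 (by exact_mod_cast hm s)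
  set G : ℕ × Bool → ℝ := fun p =>
    if p.2 then q * m p.1 * ((q : ℝ) - m (p.1 + 1)) else q * m (p.1 + 1) * ((q : ℝ) - m p.1)
  have hG : ∀ p ∈ Icc 1 (L - 1) ×ˢ (univ : Finset Bool), 0 ≤ G p := by
    rintro ⟨j, d⟩ -
    cases d
    · exact mul_nonneg (by positivity) (hq j)
    · exact mul_nonneg (by positivity) (hq (j + 1))
  have hneighbour : ∀ n ∈ (univ.filter fun Y : Conf q L N => adjC L m (occt Y.1)).image
      (fun Y => occt Y.1), ∃ p ∈ Icc 1 (L - 1) ×ˢ (univ : Finset Bool),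
        (if p.2 then hop m p.1 (p.1 + 1) else hop m (p.1 + 1) p.1) = n ∧ wt q L m n ≤ G p := by
    intro n hn
    obtain ⟨Y, hY, rfl⟩ := mem_image.1 hn
    obtain ⟨j, hj, ⟨hhop, hwt⟩ | ⟨hhop, hwt⟩⟩ :=
      (mem_filter.1 hY).2.exists_hop_wt_le (occt_le_of_isConf Y.isConf)
    exacts [⟨(j, true), mem_product.2 ⟨hj, mem_univ _⟩, hhop.symm, hwt⟩,
      ⟨(j, false), mem_product.2 ⟨hj, mem_univ _⟩, hhop.symm, hwt⟩]
  calc ∑ Y, hopMatrix q L N X Y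
      = ∑ n ∈ (univ.filter fun Y : Conf q L N => adjC L m (occt Y.1)).image (fun Y => occt Y.1),
          wt q L m n := by
        rw [sum_image fun Y _ Z _ h => occt_injective q L N h, sum_filter]
        rfl
    _ ≤ ∑ p ∈ Icc 1 (L - 1) ×ˢ (univ : Finset Bool), G p :=
        sum_le_sum_of_forall_exists_eq _ hG hneighbour
    _ = 2 * q * ∑ j ∈ Icc 1 (L - 1), bondEnergy q (m j) (m (j + 1)) := by
        rw [sum_product, mul_sum]
        refine sum_congr rfl fun j _ => ?_
        simp only [Fintype.sum_bool, G, if_true, Bool.false_eq_true, if_false]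
        linear_combination (-(q : ℝ)) * two_mul_bondEnergy q (m j) (m (j + 1))
    _ ≤ 2 * q * potV q L m :=
        mul_le_mul_of_nonneg_left (sum_bondEnergy_le_potV q L m) (by positivity)

theorem Ham_add_diagonal_add_smul_projLK_sub_smul_one (q L N K : ℕ) (Δ : ℝ)
    (W : Conf q L N → ℝ) (γ E : ℝ) :
    Ham q L N Δ + diagonal (fun X => ((W X : ℝ) : ℂ)) + ((γ : ℝ) : ℂ) • projLK q L N K
        - (E : ℂ) • 1
      = (diagonal (fun X => potV q L (occt X.1) + W X
            + (if potV q L (occt X.1) ≤ K then γ else 0) - E)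
          - (1 / (2 * Δ)) • hopMatrix q L N).map ((↑) : ℝ → ℂ) := by
  ext X Y
  simp only [Ham, projLK, hopMatrix, Matrix.add_apply, Matrix.sub_apply, Matrix.smul_apply,
    map_apply, diagonal_apply, one_apply, smul_eq_mul]
  split_ifs <;> push_cast <;> ring

theorem mul_le_shifted_potential {η δ K v w E : ℝ} (hη : 0 ≤ η) (hδ0 : 0 ≤ δ)
    (hδK : δ ≤ 2 * (K + 1)) (hK : 0 ≤ K) (hv1 : 1 ≤ v) (hvK : v ≤ K ∨ K + 1 ≤ v) (hw : 0 ≤ w)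
    (hE : E ≤ η * (K + 1 - δ / 2)) :
    η * (δ / (2 * (K + 1))) * v ≤ η * v + w + (if v ≤ K then η * K else 0) - E := by
  set c := δ / (2 * (K + 1))
  have hc0 : 0 ≤ c := by positivity
  have hc1 : c ≤ 1 := div_le_one_of_le₀ hδK (by positivity)
  have hcK : η * c * (K + 1) = η * δ / 2 := by
    simp only [c]
    field_simp
  rcases hvK with hv | hv
  · rw [if_pos hv]
    nlinarith [mul_nonneg hη (mul_nonneg (sub_nonneg.2 hv1) (sub_nonneg.2 hc1)),
      mul_nonneg hη (mul_nonneg hc0 hK)]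
  · rw [if_neg (by linarith)]
    nlinarith [mul_nonneg hη (mul_nonneg (by linarith : 0 ≤ v - (K + 1)) (sub_nonneg.2 hc1))]

theorem quadratic_form_lower_bound_general (twoJ L N K : ℕ) (h2J : 0 < twoJ)
    (hN1 : 1 ≤ N) (Δ δ E : ℝ) (hΔ : (twoJ : ℝ) < Δ)
    (hδ0 : 0 < δ) (hδ1 : δ < 1) (W : Conf twoJ L N → ℝ) (hW : ∀ X, 0 ≤ W X)
    (hE1 : E ≤ (1 - (twoJ : ℝ) / Δ) * ((K : ℝ) + 1 - δ / 2)) :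
    (∀ f : Conf twoJ L N → ℂ,
      (1 - (twoJ : ℝ) / Δ) * (δ / (2 * ((K : ℝ) + 1))) *
          (star f ⬝ᵥ ((Vdiag twoJ L N).mulVec f)).re
        ≤ (star f ⬝ᵥ ((Ham twoJ L N Δ + Matrix.diagonal (fun X => ((W X : ℝ) : ℂ))
            + ((((1 - (twoJ : ℝ) / Δ) * (K : ℝ)) : ℝ) : ℂ) • projLK twoJ L N K
            - (E : ℂ) • 1).mulVec f)).re)
    ∧ (Ham twoJ L N Δ + Matrix.diagonal (fun X => ((W X : ℝ) : ℂ))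
        + ((((1 - (twoJ : ℝ) / Δ) * (K : ℝ)) : ℝ) : ℂ) • projLK twoJ L N K
        - (E : ℂ) • 1).PosDef := by
  set η := 1 - (twoJ : ℝ) / Δ
  set V : Conf twoJ L N → ℝ := fun X => potV twoJ L (occt X.1)
  have hΔ0 : 0 < Δ := (Nat.cast_nonneg _).trans_lt hΔ
  have hη : 0 < η := sub_pos.2 ((div_lt_one hΔ0).2 hΔ)
  have hV1 : ∀ X, 1 ≤ V X := fun X => one_le_potV_occt h2J hN1 X.isConf
  have hcoeff : ∀ X, η * (δ / (2 * (K + 1))) * V X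
      ≤ V X + W X + (if V X ≤ K then η * K else 0) - E - 1 / (2 * Δ) * (2 * twoJ * V X) := by
    intro X
    have hKδ : δ ≤ 2 * ((K : ℝ) + 1) := by linarith [(K.cast_nonneg : (0 : ℝ) ≤ K)]
    have := mul_le_shifted_potential hη.le hδ0.le hKδ K.cast_nonneg (hV1 X)
      (potV_occt_le_or_add_one_le hN1 twoJ K X.1) (hW X) hE1
    have hscale : 1 / (2 * Δ) * (2 * twoJ * V X) = twoJ / Δ * V X := by field_simp
    linarith
  have hlower : ∀ f : Conf twoJ L N → ℂ, ∑ X, η * (δ / (2 * (K + 1))) * V X * Complex.normSq (f X)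
      ≤ (star f ⬝ᵥ ((diagonal fun X => V X + W X + (if V X ≤ K then η * K else 0) - E)
          - (1 / (2 * Δ)) • hopMatrix twoJ L N).map ((↑) : ℝ → ℂ) *ᵥ f).re := fun f =>
    (sum_le_sum fun X _ => mul_le_mul_of_nonneg_right (hcoeff X) (Complex.normSq_nonneg _)).trans
      (sum_sub_mul_normSq_le_re_star_dotProduct (hopMatrix_isSymm _ _ _) (hopMatrix_nonneg _ _ _)
        (by positivity) (sum_hopMatrix_le _ _ _) _ f)
  rw [Ham_add_diagonal_add_smul_projLK_sub_smul_one]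
  refine ⟨fun f => ?_, posDef_of_sum_mul_normSq_le
    ((isSymm_diagonal _).sub ((hopMatrix_isSymm _ _ _).smul _)).isHermitian_map_ofReal
    (fun X => mul_pos (by positivity) (by linarith [hV1 X])) hlower⟩
  rw [Vdiag, re_star_dotProduct_diagonal_ofReal_mulVec, mul_sum]
  simpa only [mul_assoc] using hlower f

/-- for `Δ > 2J`, `E ∈ [0, E_{K,δ/2}]`, `γ = (1−2J/Δ)K` and `W` a nonnegative
diagonal matrix, `⟨f, (H_N + W + γP − E)f⟩ ≥ (1−2J/Δ)(δ/(2(K+1)))⟨f, V_N f⟩` for all `f`;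
in particular `H_N + W + γP − E` is positive definite. -/
theorem quadratic_form_lower_bound (twoJ L N K : ℕ) (h2J : 0 < twoJ) (hL : 2 ≤ L)
    (hN1 : 1 ≤ N) (hN2 : N ≤ twoJ * L) (Δ δ E : ℝ) (hΔ : (twoJ : ℝ) < Δ)
    (hδ0 : 0 < δ) (hδ1 : δ < 1) (W : Conf twoJ L N → ℝ) (hW : ∀ X, 0 ≤ W X)
    (hE0 : 0 ≤ E) (hE1 : E ≤ (1 - (twoJ : ℝ) / Δ) * ((K : ℝ) + 1 - δ / 2)) :
    (∀ f : Conf twoJ L N → ℂ,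
      (1 - (twoJ : ℝ) / Δ) * (δ / (2 * ((K : ℝ) + 1))) *
          (star f ⬝ᵥ ((Vdiag twoJ L N).mulVec f)).re
        ≤ (star f ⬝ᵥ ((Ham twoJ L N Δ + Matrix.diagonal (fun X => ((W X : ℝ) : ℂ))
            + ((((1 - (twoJ : ℝ) / Δ) * (K : ℝ)) : ℝ) : ℂ) • projLK twoJ L N K
            - (E : ℂ) • 1).mulVec f)).re)
    ∧ (Ham twoJ L N Δ + Matrix.diagonal (fun X => ((W X : ℝ) : ℂ))
        + ((((1 - (twoJ : ℝ) / Δ) * (K : ℝ)) : ℝ) : ℂ) • projLK twoJ L N K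
        - (E : ℂ) • 1).PosDef :=
  quadratic_form_lower_bound_general twoJ L N K h2J hN1 Δ δ E hΔ hδ0 hδ1 W hW hE1
end

section
/- For every m ∈ M_L, one has J · B(m) ≤ V(m). -/
/-- Membership in `M_L`: functions `Λ_L → {0,…,2J}` (vanishing outside `Λ_L = {1,…,L}`). -/
def memML (twoJ L : ℕ) (m : ℕ → ℕ) : Prop :=
  (∀ j, m j ≤ twoJ) ∧ (∀ j, j ∉ Finset.Icc 1 L → m j = 0)

/-- The block count
`B(m) = #{i ∈ {1,…,L−1} : m(i)+m(i+1) ∉ {0, 4J}} + (2 − δ_{m(1),0} − δ_{m(L),0})`. -/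
def blockCount (twoJ L : ℕ) (m : ℕ → ℕ) : ℕ :=
  ((Finset.Icc 1 (L - 1)).filter
      (fun i => ¬(m i + m (i + 1) = 0 ∨ m i + m (i + 1) = 2 * twoJ))).card
    + (2 - (if m 1 = 0 then 1 else 0) - (if m L = 0 then 1 else 0))

lemma bond_nonneg {T a b : ℕ} (ha : a ≤ T) (hb : b ≤ T) :
    0 ≤ (T : ℝ) / 2 * (a + b) - a * b := by
  have ha' : (a : ℝ) ≤ T := by exact_mod_cast ha
  have hb' : (b : ℝ) ≤ T := by exact_mod_cast hb
  nlinarith [mul_nonneg (sub_nonneg.2 ha') (Nat.cast_nonneg (α := ℝ) b),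
    mul_nonneg (sub_nonneg.2 hb') (Nat.cast_nonneg (α := ℝ) a)]

lemma half_le_bond {T a b : ℕ} (ha : a ≤ T) (hb : b ≤ T)
    (hab : ¬(a + b = 0 ∨ a + b = 2 * T)) :
    (T : ℝ) / 2 ≤ (T : ℝ) / 2 * (a + b) - a * b := by
  have ha' : (a : ℝ) ≤ T := by exact_mod_cast ha
  have hb' : (b : ℝ) ≤ T := by exact_mod_cast hb
  rcases Nat.eq_zero_or_pos a with rfl | ha0
  · have hb1 : (1 : ℝ) ≤ b := by exact_mod_cast Nat.pos_of_ne_zero (by omega)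
    push_cast
    nlinarith
  rcases eq_or_ne a T with rfl | haT
  · have hb1 : (b : ℝ) + 1 ≤ a := by exact_mod_cast (show b + 1 ≤ a by omega)
    nlinarith
  -- For `1 ≤ a ≤ T - 1` the excess over `T/2` is the sum of these two nonnegative products.
  have ha1 : (1 : ℝ) ≤ a := by exact_mod_cast ha0
  have haT1 : (a : ℝ) + 1 ≤ T := by exact_mod_cast (show a + 1 ≤ T by omega)
  nlinarith [mul_nonneg (sub_nonneg.2 ha1) (sub_nonneg.2 hb'),
    mul_nonneg (Nat.cast_nonneg (α := ℝ) b) (show (0 : ℝ) ≤ T - 1 - a by linarith)]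

lemma half_mul_indicator_le_bond {T a b : ℕ} (ha : a ≤ T) (hb : b ≤ T) :
    (T : ℝ) / 2 * (if ¬(a + b = 0 ∨ a + b = 2 * T) then 1 else 0)
      ≤ (T : ℝ) / 2 * (a + b) - a * b := by
  by_cases hab : a + b = 0 ∨ a + b = 2 * T
  · rw [if_neg (not_not_intro hab), mul_zero]
    exact bond_nonneg ha hb
  · rw [if_pos hab, mul_one]
    exact half_le_bond ha hb hab

lemma two_sub_ite_sub_ite_le_add (x y : ℕ) :
    2 - (if x = 0 then 1 else 0) - (if y = 0 then 1 else 0) ≤ x + y := by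
  split_ifs <;> omega

theorem blockCount_le_potential_general (twoJ L : ℕ)
    (m : ℕ → ℕ) (hm : memML twoJ L m) :
    (twoJ : ℝ) / 2 * (blockCount twoJ L m : ℝ) ≤ potV twoJ L m := by
  unfold potV blockCount
  rw [Nat.cast_add, mul_add]
  gcongr ?_ + ?_
  · rw [Finset.card_filter, Nat.cast_sum, Finset.mul_sum]
    refine Finset.sum_le_sum fun i _ => ?_
    push_cast
    exact half_mul_indicator_le_bond (hm.1 i) (hm.1 (i + 1))
  · gcongr
    exact_mod_cast two_sub_ite_sub_ite_le_add (m 1) (m L)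

/-- for every `m ∈ M_L`, one has `J · B(m) ≤ V(m)`. -/
theorem blockCount_le_potential (twoJ L : ℕ) (h2J : 0 < twoJ) (hL : 2 ≤ L)
    (m : ℕ → ℕ) (hm : memML twoJ L m) :
    (twoJ : ℝ) / 2 * (blockCount twoJ L m : ℝ) ≤ potV twoJ L m :=
  blockCount_le_potential_general twoJ L m hm
end

section
/- Let m ∈ M_L be nonzero with B(m) ≤ R for some integer R ≥ 2. Then there exist τ ≤ R − 1 building blocks k⁽¹⁾, …, k⁽ᵗ⁾ ∈ K_L with pairwise disjoint supports such that m = k⁽¹⁾ + ⋯ + k⁽ᵗ⁾. -/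
/-- Membership in the set `K_L` of building blocks: either a single occupied column, or a
rectangular block where every site of a discrete interval `[α,β] ⊆ Λ_L` carries exactly
`2J` particles. -/
def memKL (twoJ L : ℕ) (m : ℕ → ℕ) : Prop :=
  memML twoJ L m ∧
    ((∃ j ∈ Finset.Icc 1 L, m j ≠ 0 ∧ ∀ i, i ≠ j → m i = 0) ∨
     (∃ α ∈ Finset.Icc 1 L, ∃ β ∈ Finset.Icc 1 L, α ≤ β ∧
        ∀ i, m i = if α ≤ i ∧ i ≤ β then twoJ else 0))

section BlockDecomposition

variable {twoJ L : ℕ} {m : ℕ → ℕ}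

theorem memML.indicator (hm : memML twoJ L m) (s : Set ℕ) : memML twoJ L (s.indicator m) :=
  ⟨fun j => (Set.indicator_le_self s m j).trans (hm.1 j),
    fun j hj => Set.indicator_apply_eq_zero.mpr fun _ => hm.2 j hj⟩

-- Since `m 0 = m (L + 1) = 0`, the boundary term of `blockCount` counts the bonds `(0, 1)` and
-- `(L, L + 1)`.
def activeBonds (twoJ L : ℕ) (m : ℕ → ℕ) : Finset ℕ :=
  (Finset.range (L + 1)).filter fun i => m i + m (i + 1) ≠ 0 ∧ m i + m (i + 1) ≠ 2 * twoJ

theorem blockCount_eq_card_activeBonds (hm : memML twoJ L m) :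
    blockCount twoJ L m = (activeBonds twoJ L m).card := by
  have hout : ∀ j, (j = 0 ∨ L < j) → m j = 0 := fun j hj =>
    hm.2 j (by simp only [Finset.mem_Icc]; omega)
  rcases Nat.eq_zero_or_pos L with rfl | hL
  · simp [blockCount, activeBonds, Finset.filter_singleton, hout 0 (by omega), hout 1 (by omega)]
  have hrange : Finset.range (L + 1) = insert 0 (insert L (Finset.Icc 1 (L - 1))) := by
    ext i; simp only [Finset.mem_range, Finset.mem_insert, Finset.mem_Icc]; omega
  have h0 : 0 ∉ insert L (Finset.Icc 1 (L - 1)) := by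
    simp only [Finset.mem_insert, Finset.mem_Icc]; omega
  rw [blockCount, activeBonds, hrange, Finset.filter_insert, Finset.filter_insert]
  have := hm.1 1
  have := hm.1 L
  simp only [hout 0 (by omega), hout (L + 1) (by omega), zero_add, add_zero, ne_eq, not_or]
  split_ifs <;> simp_all <;> omega

structure IsLastBlock (twoJ : ℕ) (m : ℕ → ℕ) (a b : ℕ) : Prop where
  one_le : 1 ≤ a
  le : a ≤ b
  right_ne_zero : m b ≠ 0
  eq_zero_of_lt : ∀ i, b < i → m i = 0
  -- keeps the bond `(a - 1, a)` active, so that removing the block activates no new bond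
  maximal : m (a - 1) ≠ twoJ ∨ m a ≠ twoJ
  eq_or_full : a = b ∨ ∀ i ∈ Set.Icc a b, m i = twoJ

theorem exists_isLastBlock (hm : memML twoJ L m) (hm0 : m ≠ 0) : ∃ a b, IsLastBlock twoJ m a b := by
  obtain ⟨j, hj : m j ≠ 0⟩ := Function.ne_iff.mp hm0
  have hjL : j ≤ L := by
    by_contra h; exact hj (hm.2 j (by simp only [Finset.mem_Icc]; omega))
  set b := Nat.findGreatest (fun i => m i ≠ 0) L
  have hb : m b ≠ 0 := Nat.findGreatest_spec (P := fun i => m i ≠ 0) hjL hj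
  have hb0 : 1 ≤ b := by
    by_contra h; exact hb (hm.2 b (by simp only [Finset.mem_Icc]; omega))
  have htail : ∀ i, b < i → m i = 0 := fun i hi => by
    by_cases hiL : i ≤ L
    · exact not_not.mp (Nat.findGreatest_is_greatest hi hiL)
    · exact hm.2 i (by simp only [Finset.mem_Icc]; omega)
  by_cases hfull : m b = twoJ
  · have h0 : m 0 ≠ twoJ := by rw [hm.2 0 (by simp)]; omega
    set c := Nat.findGreatest (fun i => m i ≠ twoJ) b
    have hc : m c ≠ twoJ := Nat.findGreatest_spec (P := fun i => m i ≠ twoJ) (Nat.zero_le b) h0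
    have hcb : c < b := (Nat.findGreatest_le b).lt_of_ne fun h : c = b => hc (by rwa [h])
    refine ⟨c + 1, b, ⟨by omega, hcb, hb, htail, Or.inl hc, Or.inr ?_⟩⟩
    exact fun i hi => not_not.mp (Nat.findGreatest_is_greatest (P := fun i => m i ≠ twoJ)
      (Nat.lt_of_succ_le hi.1) hi.2)
  · exact ⟨b, b, ⟨hb0, le_rfl, hb, htail, Or.inr hfull, Or.inl rfl⟩⟩

namespace IsLastBlock

variable {a b : ℕ}

theorem right_le (hm : memML twoJ L m) (h : IsLastBlock twoJ m a b) : b ≤ L := by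
  by_contra hbL; exact h.right_ne_zero (hm.2 b (by simp only [Finset.mem_Icc]; omega))

theorem memKL (hm : memML twoJ L m) (h : IsLastBlock twoJ m a b) :
    memKL twoJ L ((Set.Icc a b).indicator m) := by
  have hbL := h.right_le hm
  refine ⟨hm.indicator _, ?_⟩
  rcases h.eq_or_full with rfl | hfull
  · refine Or.inl ⟨a, Finset.mem_Icc.mpr ⟨h.one_le, hbL⟩, by simpa using h.right_ne_zero, ?_⟩
    intro i hi
    simp [hi]
  · refine Or.inr ⟨a, Finset.mem_Icc.mpr ⟨h.one_le, h.le.trans hbL⟩, b,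
      Finset.mem_Icc.mpr ⟨h.one_le.trans h.le, hbL⟩, h.le, fun i => ?_⟩
    by_cases hi : a ≤ i ∧ i ≤ b
    · rw [Set.indicator_of_mem (s := Set.Icc a b) hi, if_pos hi, hfull i hi]
    · rw [Set.indicator_of_notMem (s := Set.Icc a b) hi, if_neg hi]

theorem mem_activeBonds (hm : memML twoJ L m) (h : IsLastBlock twoJ m a b) :
    a - 1 ∈ activeBonds twoJ L m ∧ b ∈ activeBonds twoJ L m := by
  have hbL := h.right_le hm
  have hb := hm.1 b
  have hb0 := h.right_ne_zero
  have hab := h.le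
  have ha : m a ≠ 0 := by
    rcases h.eq_or_full with rfl | hfull
    · exact h.right_ne_zero
    · rw [hfull a ⟨le_rfl, h.le⟩]; omega
  have ha' := hm.1 a
  have ha1 := hm.1 (a - 1)
  have hedge := h.maximal
  simp only [activeBonds, Finset.mem_filter, Finset.mem_range, Nat.sub_add_cancel h.one_le,
    h.eq_zero_of_lt (b + 1) (by omega)]
  omega

theorem activeBonds_indicator_compl_subset (hm : memML twoJ L m) (h : IsLastBlock twoJ m a b) :
    activeBonds twoJ L ((Set.Icc a b)ᶜ.indicator m) ⊆ (activeBonds twoJ L m).filter (· < a) := by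
  intro i hi
  simp only [activeBonds, Finset.mem_filter, Finset.mem_range, Set.indicator_apply,
    Set.mem_compl_iff, Set.mem_Icc] at hi ⊢
  obtain ⟨hiL, hne0, hne2⟩ := hi
  have hmi := hm.1 i
  have hmi1 := hm.1 (i + 1)
  have hi0 := h.eq_zero_of_lt i
  have hi10 := h.eq_zero_of_lt (i + 1)
  rcases lt_trichotomy (i + 1) a with hlt | rfl | hgt
  · rw [if_pos (by omega), if_pos (by omega)] at hne0 hne2
    exact ⟨⟨hiL, hne0, hne2⟩, by omega⟩
  · rw [if_pos (by omega), if_neg (by have := h.le; omega)] at hne0 hne2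
    have hedge := h.maximal
    simp only [add_tsub_cancel_right] at hedge
    omega
  · split_ifs at hne0 <;> omega

theorem two_le_blockCount (hm : memML twoJ L m) (h : IsLastBlock twoJ m a b) :
    2 ≤ blockCount twoJ L m := by
  rw [blockCount_eq_card_activeBonds hm]
  obtain ⟨ha, hb⟩ := h.mem_activeBonds hm
  refine Finset.one_lt_card.mpr ⟨a - 1, ha, b, hb, ?_⟩
  have := h.le
  have := h.one_le
  omega

theorem blockCount_indicator_compl_lt (hm : memML twoJ L m) (h : IsLastBlock twoJ m a b) :
    blockCount twoJ L ((Set.Icc a b)ᶜ.indicator m) < blockCount twoJ L m := by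
  rw [blockCount_eq_card_activeBonds hm, blockCount_eq_card_activeBonds (hm.indicator _)]
  refine (Finset.card_le_card (h.activeBonds_indicator_compl_subset hm)).trans_lt
    (Finset.card_lt_card ?_)
  exact Finset.filter_ssubset.mpr ⟨b, (h.mem_activeBonds hm).2, by simpa using h.le⟩

end IsLastBlock

def IsBlockDecomposition (twoJ L : ℕ) (m : ℕ → ℕ) {τ : ℕ} (kk : Fin τ → ℕ → ℕ) : Prop :=
  (∀ i, memKL twoJ L (kk i)) ∧ (∀ i i', i ≠ i' → ∀ x, kk i x = 0 ∨ kk i' x = 0) ∧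
    ∀ x, m x = ∑ i, kk i x

theorem isBlockDecomposition_zero : IsBlockDecomposition twoJ L 0 (Fin.elim0 : Fin 0 → ℕ → ℕ) :=
  ⟨fun i => i.elim0, fun i => i.elim0, fun _ => rfl⟩

theorem IsBlockDecomposition.cons {τ : ℕ} {kk : Fin τ → ℕ → ℕ} {k : ℕ → ℕ}
    (h : IsBlockDecomposition twoJ L m kk) (hk : memKL twoJ L k) (hdisj : ∀ x, k x = 0 ∨ m x = 0) :
    IsBlockDecomposition twoJ L (k + m) (Fin.cons k kk : Fin (τ + 1) → ℕ → ℕ) := by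
  obtain ⟨hK, hD, hS⟩ := h
  have hle : ∀ j x, kk j x ≤ m x := fun j x =>
    (hS x).symm ▸ Finset.single_le_sum (f := fun i => kk i x) (fun _ _ => Nat.zero_le _)
      (Finset.mem_univ j)
  have hdisj' : ∀ j x, k x = 0 ∨ kk j x = 0 := fun j x =>
    (hdisj x).imp_right fun h : m x = 0 => Nat.eq_zero_of_le_zero (h ▸ hle j x)
  refine ⟨Fin.cases hk hK, ?_, fun x => by simp [Fin.sum_univ_succ, hS x]⟩
  intro i i' hii' x
  cases i using Fin.cases <;> cases i' using Fin.cases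
  · exact absurd rfl hii'
  · exact hdisj' _ x
  · exact (hdisj' _ x).symm
  · exact hD _ _ (fun h => hii' (congrArg Fin.succ h)) x

end BlockDecomposition

theorem exists_isBlockDecomposition {twoJ L : ℕ} {m : ℕ → ℕ} (hm : memML twoJ L m) (hm0 : m ≠ 0) :
    ∃ (τ : ℕ) (kk : Fin τ → ℕ → ℕ),
      IsBlockDecomposition twoJ L m kk ∧ τ + 1 ≤ blockCount twoJ L m := by
  obtain ⟨a, b, hab⟩ := exists_isLastBlock hm hm0
  have hdisj : ∀ x, (Set.Icc a b).indicator m x = 0 ∨ (Set.Icc a b)ᶜ.indicator m x = 0 := by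
    intro x
    by_cases hx : x ∈ Set.Icc a b <;> simp [hx]
  obtain ⟨τ, kk, hkk, hτ⟩ : ∃ (τ : ℕ) (kk : Fin τ → ℕ → ℕ),
      IsBlockDecomposition twoJ L ((Set.Icc a b)ᶜ.indicator m) kk ∧
        τ + 2 ≤ blockCount twoJ L m := by
    by_cases hrest : (Set.Icc a b)ᶜ.indicator m = 0
    · exact ⟨0, Fin.elim0, hrest ▸ isBlockDecomposition_zero, hab.two_le_blockCount hm⟩
    · obtain ⟨τ, kk, hkk, hτ⟩ := exists_isBlockDecomposition (hm.indicator _) hrest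
      exact ⟨τ, kk, hkk, by have := hab.blockCount_indicator_compl_lt hm; omega⟩
  refine ⟨τ + 1, Fin.cons ((Set.Icc a b).indicator m) kk, ?_, by omega⟩
  simpa only [Set.indicator_self_add_compl] using hkk.cons (hab.memKL hm) hdisj
termination_by blockCount twoJ L m
decreasing_by exact hab.blockCount_indicator_compl_lt hm

theorem decomposition_into_building_blocks_general (twoJ L R : ℕ)
    (m : ℕ → ℕ) (hm : memML twoJ L m) (hm0 : m ≠ 0)
    (hB : blockCount twoJ L m ≤ R) :
    ∃ (τ : ℕ) (kk : Fin τ → (ℕ → ℕ)), τ ≤ R - 1 ∧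
      (∀ i, memKL twoJ L (kk i)) ∧
      (∀ i i', i ≠ i' → ∀ x, kk i x = 0 ∨ kk i' x = 0) ∧
      (∀ x, m x = ∑ i, kk i x) := by
  obtain ⟨τ, kk, ⟨hK, hdisj, hsum⟩, hτ⟩ := exists_isBlockDecomposition hm hm0
  exact ⟨τ, kk, by omega, hK, hdisj, hsum⟩

/-- a nonzero `m ∈ M_L` with `B(m) ≤ R` (`R ≥ 2`) decomposes into `τ ≤ R − 1`
building blocks with pairwise disjoint supports. -/
theorem decomposition_into_building_blocks (twoJ L R : ℕ) (h2J : 0 < twoJ) (hL : 2 ≤ L)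
    (hR : 2 ≤ R) (m : ℕ → ℕ) (hm : memML twoJ L m) (hm0 : m ≠ 0)
    (hB : blockCount twoJ L m ≤ R) :
    ∃ (τ : ℕ) (kk : Fin τ → (ℕ → ℕ)), τ ≤ R - 1 ∧
      (∀ i, memKL twoJ L (kk i)) ∧
      (∀ i i', i ≠ i' → ∀ x, kk i x = 0 ∨ kk i' x = 0) ∧
      (∀ x, m x = ∑ i, kk i x) :=
  decomposition_into_building_blocks_general twoJ L R m hm hm0 hB
end

section
/- Let m′, m″ ∈ M_L and t ∈ Λ_L satisfy: m′(i) = 0 for all i > t, m″(i) = 0 for all i < t, and m′(t) + m″(t) ≤ 2J. Then m′ + m″ ∈ M_L and V(m′) ≤ V(m′ + m″). -/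
noncomputable def bondV (twoJ x y : ℕ) : ℝ :=
  (twoJ : ℝ) / 2 * ((x : ℝ) + (y : ℝ)) - (x : ℝ) * (y : ℝ)

lemma potV_eq_sum_bondV (twoJ L : ℕ) (m : ℕ → ℕ) :
    potV twoJ L m = ∑ j ∈ Finset.Icc 1 (L - 1), bondV twoJ (m j) (m (j + 1))
      + (twoJ : ℝ) / 2 * ((m 1 : ℝ) + (m L : ℝ)) :=
  rfl

lemma bondV_add_ge {twoJ x y u v : ℕ} (hxu : x + u ≤ twoJ) (huy : u * y = 0) :
    bondV twoJ x y + (twoJ : ℝ) / 2 * u ≤ bondV twoJ (x + u) (y + v) + (twoJ : ℝ) / 2 * v := by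
  have hxu' : (x : ℝ) + u ≤ twoJ := by exact_mod_cast hxu
  have huy' : (u : ℝ) * y = 0 := by exact_mod_cast huy
  have hexcess : bondV twoJ (x + u) (y + v) + (twoJ : ℝ) / 2 * v
      - (bondV twoJ x y + (twoJ : ℝ) / 2 * u) = v * (twoJ - (x + u)) - u * y := by
    unfold bondV; push_cast; ring
  nlinarith [mul_nonneg v.cast_nonneg (sub_nonneg.2 hxu')]

theorem potV_le_potV_add {twoJ L : ℕ} (hL : 2 ≤ L) {a b : ℕ → ℕ}
    (hab : ∀ j, a j + b j ≤ twoJ) (hba : ∀ j, b j * a (j + 1) = 0) :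
    potV twoJ L a ≤ potV twoJ L (a + b) := by
  set g : ℕ → ℝ := fun j => (twoJ : ℝ) / 2 * b j
  have hbonds : ∑ j ∈ Finset.Icc 1 (L - 1), (bondV twoJ (a j) (a (j + 1)) + g j) ≤
      ∑ j ∈ Finset.Icc 1 (L - 1), (bondV twoJ (a j + b j) (a (j + 1) + b (j + 1)) + g (j + 1)) :=
    Finset.sum_le_sum fun j _ => bondV_add_ge (hab j) (hba j)
  have htelescope := Finset.sum_Icc_sub (show 1 ≤ L - 1 by omega) g
  rw [Nat.sub_add_cancel (by omega)] at htelescope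
  rw [Finset.sum_add_distrib, Finset.sum_add_distrib] at hbonds
  rw [Finset.sum_sub_distrib] at htelescope
  rw [potV_eq_sum_bondV, potV_eq_sum_bondV]
  simp only [Pi.add_apply, Nat.cast_add]
  have hg1 : 0 ≤ g 1 := by positivity
  simp only [g] at hbonds htelescope hg1
  linarith

section Gluing

variable {twoJ t : ℕ} {m' m'' : ℕ → ℕ}

lemma add_le_of_glued (hm' : ∀ j, m' j ≤ twoJ) (hm'' : ∀ j, m'' j ≤ twoJ)
    (h1 : ∀ i, t < i → m' i = 0) (h2 : ∀ i, i < t → m'' i = 0) (h3 : m' t + m'' t ≤ twoJ) :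
    ∀ j, m' j + m'' j ≤ twoJ := by
  intro j
  rcases lt_trichotomy j t with hj | rfl | hj
  · simpa [h2 j hj] using hm' j
  · exact h3
  · simpa [h1 j hj] using hm'' j

lemma mul_succ_eq_zero_of_glued (h1 : ∀ i, t < i → m' i = 0) (h2 : ∀ i, i < t → m'' i = 0) :
    ∀ j, m'' j * m' (j + 1) = 0 := by
  intro j
  rcases lt_or_ge j t with hj | hj
  · simp [h2 j hj]
  · simp [h1 (j + 1) (by omega)]

end Gluing

lemma memML_add {twoJ L : ℕ} {m' m'' : ℕ → ℕ} (hm' : memML twoJ L m') (hm'' : memML twoJ L m'')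
    (hle : ∀ j, m' j + m'' j ≤ twoJ) : memML twoJ L (m' + m'') :=
  ⟨hle, fun j hj => by simp [hm'.2 j hj, hm''.2 j hj]⟩

theorem potential_monotone_under_gluing_general (twoJ L : ℕ) (hL : 2 ≤ L)
    (m' m'' : ℕ → ℕ) (t : ℕ)
    (hm' : memML twoJ L m') (hm'' : memML twoJ L m'')
    (h1 : ∀ i, t < i → m' i = 0) (h2 : ∀ i, i < t → m'' i = 0)
    (h3 : m' t + m'' t ≤ twoJ) :
    memML twoJ L (m' + m'') ∧ potV twoJ L m' ≤ potV twoJ L (m' + m'') := by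
  have hle := add_le_of_glued hm'.1 hm''.1 h1 h2 h3
  exact ⟨memML_add hm' hm'' hle, potV_le_potV_add hL hle (mul_succ_eq_zero_of_glued h1 h2)⟩

/-- if `m′` lives to the left of `t`, `m″` to the right of `t`, and
`m′(t) + m″(t) ≤ 2J`, then `m′ + m″ ∈ M_L` and `V(m′) ≤ V(m′ + m″)`. -/
theorem potential_monotone_under_gluing (twoJ L : ℕ) (h2J : 0 < twoJ) (hL : 2 ≤ L)
    (m' m'' : ℕ → ℕ) (t : ℕ) (ht : t ∈ Finset.Icc 1 L)
    (hm' : memML twoJ L m') (hm'' : memML twoJ L m'')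
    (h1 : ∀ i, t < i → m' i = 0) (h2 : ∀ i, i < t → m'' i = 0)
    (h3 : m' t + m'' t ≤ twoJ) :
    memML twoJ L (m' + m'') ∧ potV twoJ L m' ≤ potV twoJ L (m' + m'') :=
  potential_monotone_under_gluing_general twoJ L hL m' m'' t hm' hm'' h1 h2 h3
end
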